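/- arXiv:2504.01721 — 11 statements merged into one kernel-verified Lean document; each statement's English description precedes it below -/
import Mathlib

section
/- Fix x, g ∈ ℝⁿ, λ > 0, and nonnegative reals a, b, η^g. Let x(λ) = prox_{λh}(x − λg), set G = λ⁻¹(x − x(λ)), and assume the gradient-inexactness condition ‖g − ∇f(x)‖² ≤ (η^g)² + (a²/λ² + b²)‖x(λ) − x‖². Then f(x(λ)) ≤ f(x) + (λ/2)(2a + (2b + 1 + L)λ)‖G‖² + Υ₁(λ)(η^g)² − λ⟨g, G⟩. -/
/-!
The descent lemma `f y ≤ f x + ⟪∇f x, y - x⟫ + (L/2)‖y - x‖²` holds because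
`t ↦ f (x + t(y - x)) - t⟪∇f x, y - x⟫ - (L/2) t² ‖y - x‖²` is antitone on `t ≥ 0`. At
`y = x(λ) = x - λG`, replacing `∇f x` by `g` costs `‖g - ∇f x‖ ‖x(λ) - x‖`. Young's inequality
with weight `c = max (a/λ) b 1` and the inexactness condition bound this by
`ηg²/(2c) + ((a²/λ² + b²)/(2c) + c/2) ‖x(λ) - x‖²`, and `1/(2c) ≤ Υ₁(λ)`,
`(a²/λ² + b²)/(2c) + c/2 ≤ a/λ + b + 1/2`.
-/

open RealInnerProductSpace

/-- `Υ₁(λ)`: the error-weighting constant from the paper. -/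
noncomputable def Ups1 (a b lam : ℝ) : ℝ :=
  if a = 0 ∧ b = 0 then 1 / 2
  else if b = 0 then lam / (2 * a)
  else if a = 0 then 1 / (2 * b)
  else min (lam / (2 * a)) (1 / (2 * b))

section LipschitzGradient

variable {E : Type*} [NormedAddCommGroup E] [InnerProductSpace ℝ E] [CompleteSpace E]
  {f : E → ℝ}

theorem DifferentiableAt.hasDerivAt_comp_add_smul {x d : E} {t : ℝ}
    (hf : DifferentiableAt ℝ f (x + t • d)) :
    HasDerivAt (fun s : ℝ => f (x + s • d)) ⟪gradient f (x + t • d), d⟫ t := by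
  have hline : HasDerivAt (fun s : ℝ => x + s • d) d t := by
    simpa using ((hasDerivAt_id t).smul_const d).const_add x
  rw [inner_gradient_left]
  exact hf.hasFDerivAt.comp_hasDerivAt t hline

theorem le_add_inner_gradient_add_of_lipschitz_gradient (hf : Differentiable ℝ f) {L : ℝ}
    (hlip : ∀ u v : E, ‖gradient f u - gradient f v‖ ≤ L * ‖u - v‖) (x y : E) :
    f y ≤ f x + ⟪gradient f x, y - x⟫ + L / 2 * ‖y - x‖ ^ 2 := by
  set d := y - x
  let ψ : ℝ → ℝ := fun t => f (x + t • d) - t * ⟪gradient f x, d⟫ - L / 2 * t ^ 2 * ‖d‖ ^ 2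
  have hψ : ∀ t, HasDerivAt ψ
      (⟪gradient f (x + t • d), d⟫ - ⟪gradient f x, d⟫ - L * t * ‖d‖ ^ 2) t := fun t => by
    have hsq := ((hasDerivAt_pow 2 t).const_mul (L / 2)).mul_const (‖d‖ ^ 2)
    have hlin := (hasDerivAt_id t).mul_const ⟪gradient f x, d⟫
    exact (((hf (x + t • d)).hasDerivAt_comp_add_smul.sub hlin).sub hsq).congr_deriv
      (by push_cast; ring)
  have hψ' : ∀ t ∈ interior (Set.Ici (0 : ℝ)),
      ⟪gradient f (x + t • d), d⟫ - ⟪gradient f x, d⟫ - L * t * ‖d‖ ^ 2 ≤ 0 := by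
    intro t ht
    rw [interior_Ici, Set.mem_Ioi] at ht
    calc ⟪gradient f (x + t • d), d⟫ - ⟪gradient f x, d⟫ - L * t * ‖d‖ ^ 2
        = ⟪gradient f (x + t • d) - gradient f x, d⟫ - L * t * ‖d‖ ^ 2 := by
          rw [inner_sub_left]
      _ ≤ L * ‖(x + t • d) - x‖ * ‖d‖ - L * t * ‖d‖ ^ 2 := by
          gcongr
          exact (real_inner_le_norm _ _).trans
            (mul_le_mul_of_nonneg_right (hlip _ _) (norm_nonneg d))
      _ = 0 := by
          rw [add_sub_cancel_left, norm_smul, Real.norm_of_nonneg ht.le]; ring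
  have hanti : AntitoneOn ψ (Set.Ici 0) :=
    antitoneOn_of_hasDerivWithinAt_nonpos (convex_Ici 0)
      (HasDerivAt.continuousOn fun t _ => hψ t)
      (fun t _ => (hψ t).hasDerivWithinAt) hψ'
  have h10 : ψ 1 ≤ ψ 0 := hanti Set.self_mem_Ici (Set.mem_Ici.2 zero_le_one) zero_le_one
  simp only [ψ, d, add_sub_cancel, one_smul, zero_smul, add_zero, one_mul, one_pow, mul_one,
    zero_mul, zero_pow two_ne_zero, sub_zero, mul_zero] at h10
  linarith

theorem le_add_inner_add_of_lipschitz_gradient (hf : Differentiable ℝ f) {L : ℝ}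
    (hlip : ∀ u v : E, ‖gradient f u - gradient f v‖ ≤ L * ‖u - v‖) (x y g : E) :
    f y ≤ f x + ⟪g, y - x⟫ + ‖g - gradient f x‖ * ‖y - x‖ + L / 2 * ‖y - x‖ ^ 2 := by
  have herr : ⟪gradient f x - g, y - x⟫ ≤ ‖g - gradient f x‖ * ‖y - x‖ := by
    rw [← norm_neg, neg_sub]; exact real_inner_le_norm _ _
  have := le_add_inner_gradient_add_of_lipschitz_gradient hf hlip x y
  rw [inner_sub_left] at herr
  linarith

end LipschitzGradient

theorem one_div_two_mul_max_le_Ups1 {a b lam : ℝ} (ha : 0 ≤ a) (hb : 0 ≤ b) (hlam : 0 < lam) :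
    1 / (2 * max (max (a / lam) b) 1) ≤ Ups1 a b lam := by
  set c := max (max (a / lam) b) 1
  have hmono : ∀ c', 0 < c' → c' ≤ c → 1 / (2 * c) ≤ 1 / (2 * c') := fun c' hc' hle =>
    one_div_le_one_div_of_le (by positivity) (by linarith)
  have hαc : a / lam ≤ c := (le_max_left _ _).trans (le_max_left _ _)
  have hbc : b ≤ c := (le_max_right _ _).trans (le_max_left _ _)
  have hlam_div : ∀ a, lam / (2 * a) = 1 / (2 * (a / lam)) := fun a => by
    field_simp
  unfold Ups1
  split_ifs with h0 hb0 ha0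
  · simpa using hmono 1 one_pos (le_max_right _ _)
  · have ha' : 0 < a := ha.lt_of_ne fun h => h0 ⟨h.symm, hb0⟩
    rw [hlam_div]
    exact hmono _ (div_pos ha' hlam) hαc
  · exact hmono b (hb.lt_of_ne' hb0) hbc
  · rw [hlam_div]
    exact le_min (hmono _ (div_pos (ha.lt_of_ne' ha0) hlam) hαc) (hmono b (hb.lt_of_ne' hb0) hbc)

theorem mul_le_Ups1_mul_sq_add {a b lam η e δ : ℝ} (ha : 0 ≤ a) (hb : 0 ≤ b) (hlam : 0 < lam)
    (h : e ^ 2 ≤ η ^ 2 + (a ^ 2 / lam ^ 2 + b ^ 2) * δ ^ 2) :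
    e * δ ≤ Ups1 a b lam * η ^ 2 + (a / lam + b + 1 / 2) * δ ^ 2 := by
  set α := a / lam
  set c := max (max α b) 1
  have hα : 0 ≤ α := div_nonneg ha hlam.le
  have hαc : α ≤ c := (le_max_left _ _).trans (le_max_left _ _)
  have hbc : b ≤ c := (le_max_right _ _).trans (le_max_left _ _)
  have hc : 0 < c := one_pos.trans_le (le_max_right _ _)
  have hamgm : e * δ ≤ e ^ 2 / (2 * c) + c / 2 * δ ^ 2 := by
    have hsq : 0 ≤ (e - c * δ) ^ 2 / (2 * c) := by positivity
    have hgap : e ^ 2 / (2 * c) + c / 2 * δ ^ 2 - e * δ = (e - c * δ) ^ 2 / (2 * c) := by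
      field_simp; ring
    linarith
  have hcoef : (α ^ 2 + b ^ 2) / (2 * c) + c / 2 ≤ α + b + 1 / 2 := by
    have hcsum : c ≤ α + b + 1 := max_le (max_le (by linarith) (by linarith)) (by linarith)
    rw [div_add' _ _ _ (by positivity), div_le_iff₀ (by positivity)]
    nlinarith [mul_le_mul_of_nonneg_left hαc hα, mul_le_mul_of_nonneg_left hbc hb]
  have hups := one_div_two_mul_max_le_Ups1 ha hb hlam
  rw [← div_pow] at h
  calc e * δ ≤ e ^ 2 / (2 * c) + c / 2 * δ ^ 2 := hamgm
    _ ≤ (η ^ 2 + (α ^ 2 + b ^ 2) * δ ^ 2) / (2 * c) + c / 2 * δ ^ 2 := by gcongr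
    _ = 1 / (2 * c) * η ^ 2 + ((α ^ 2 + b ^ 2) / (2 * c) + c / 2) * δ ^ 2 := by ring
    _ ≤ Ups1 a b lam * η ^ 2 + (α + b + 1 / 2) * δ ^ 2 := by gcongr

theorem stmt2_general {n : ℕ}
    (f : EuclideanSpace ℝ (Fin n) → ℝ)
    (hf : Differentiable ℝ f)
    (L : ℝ)
    (hlip : ∀ u v : EuclideanSpace ℝ (Fin n),
      ‖gradient f u - gradient f v‖ ≤ L * ‖u - v‖)
    (a b ηg : ℝ) (ha : 0 ≤ a) (hb : 0 ≤ b)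
    (lam : ℝ) (hlam : 0 < lam)
    (x g : EuclideanSpace ℝ (Fin n))
    (xlam : EuclideanSpace ℝ (Fin n))
    (G : EuclideanSpace ℝ (Fin n)) (hG : G = lam⁻¹ • (x - xlam))
    (hgrad : ‖g - gradient f x‖ ^ 2
      ≤ ηg ^ 2 + (a ^ 2 / lam ^ 2 + b ^ 2) * ‖xlam - x‖ ^ 2) :
    f xlam ≤ f x + lam / 2 * (2 * a + (2 * b + 1 + L) * lam) * ‖G‖ ^ 2
      + Ups1 a b lam * ηg ^ 2 - lam * ⟪g, G⟫ := by
  have hstep : xlam - x = -(lam • G) := by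
    rw [hG, smul_smul, mul_inv_cancel₀ hlam.ne', one_smul, neg_sub]
  have hnorm : ‖xlam - x‖ = lam * ‖G‖ := by
    rw [hstep, norm_neg, norm_smul, Real.norm_of_nonneg hlam.le]
  have hdesc := le_add_inner_add_of_lipschitz_gradient hf hlip x xlam g
  have herr := mul_le_Ups1_mul_sq_add ha hb hlam hgrad
  rw [hnorm] at hdesc herr
  rw [hstep, inner_neg_right, real_inner_smul_right] at hdesc
  have hcoef : (a / lam + b + 1 / 2) * (lam * ‖G‖) ^ 2 + L / 2 * (lam * ‖G‖) ^ 2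
      = lam / 2 * (2 * a + (2 * b + 1 + L) * lam) * ‖G‖ ^ 2 := by
    field_simp; ring
  linarith

/-- descent-type inequality under the gradient-inexactness condition. -/
theorem stmt2 {n : ℕ}
    (f h : EuclideanSpace ℝ (Fin n) → ℝ)
    (hconv : ConvexOn ℝ Set.univ h)
    (hf : Differentiable ℝ f)
    (L : ℝ) (hL : 0 < L)
    (hlip : ∀ u v : EuclideanSpace ℝ (Fin n),
      ‖gradient f u - gradient f v‖ ≤ L * ‖u - v‖)
    (prox : ℝ → EuclideanSpace ℝ (Fin n) → EuclideanSpace ℝ (Fin n))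
    (hprox : ∀ lam : ℝ, 0 < lam → ∀ u y : EuclideanSpace ℝ (Fin n),
      1 / (2 * lam) * ‖prox lam u - u‖ ^ 2 + h (prox lam u)
        ≤ 1 / (2 * lam) * ‖y - u‖ ^ 2 + h y)
    (a b ηg : ℝ) (ha : 0 ≤ a) (hb : 0 ≤ b) (hηg : 0 ≤ ηg)
    (lam : ℝ) (hlam : 0 < lam)
    (x g : EuclideanSpace ℝ (Fin n))
    (xlam : EuclideanSpace ℝ (Fin n)) (hxlam : xlam = prox lam (x - lam • g))
    (G : EuclideanSpace ℝ (Fin n)) (hG : G = lam⁻¹ • (x - xlam))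
    (hgrad : ‖g - gradient f x‖ ^ 2
      ≤ ηg ^ 2 + (a ^ 2 / lam ^ 2 + b ^ 2) * ‖xlam - x‖ ^ 2) :
    f xlam ≤ f x + lam / 2 * (2 * a + (2 * b + 1 + L) * lam) * ‖G‖ ^ 2
      + Ups1 a b lam * ηg ^ 2 - lam * ⟪g, G⟫ :=
  stmt2_general f hf L hlip a b ηg ha hb lam hlam x g xlam G hG hgrad
end

section
/- Let c ≥ 0, b ≥ 0, 0 < a < 1 − 4c, and η^g, η^f ≥ 0. Fix x, g ∈ ℝⁿ and λ ∈ (0, λ̄], where λ̄ = 2(1/2 − a − 2c)/(L + 2b + 1). Put x(λ) = prox_{λh}(x − λg). Assume the gradient-inexactness condition ‖g − ∇f(x)‖² ≤ (η^g)² + (a²/λ² + b²)‖x(λ) − x‖², and that the inexact function values fₓ, f_λ ∈ ℝ satisfy |fₓ − f(x)| ≤ η^f + (c/λ)‖x(λ) − x‖² and |f_λ − f(x(λ))| ≤ η^f + (c/λ)‖x(λ) − x‖². Then the line-search condition f_λ ≤ fₓ + ⟨g, x(λ) − x⟩ + (1/(2λ))‖x(λ) − x‖² + ν holds, where ν = Υ₁(λ)(η^g)²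 + 2η^f. -/
open RealInnerProductSpace

lemma grad_apply' {n : ℕ} (f : EuclideanSpace ℝ (Fin n) → ℝ) (u w : EuclideanSpace ℝ (Fin n)) :
    ⟪gradient f u, w⟫ = fderiv ℝ f u w := by
  rw [gradient, ← InnerProductSpace.toDual_apply_apply, LinearIsometryEquiv.apply_symm_apply]

lemma descent_lemma' {n : ℕ} (f : EuclideanSpace ℝ (Fin n) → ℝ) (hf : Differentiable ℝ f)
    (L : ℝ) (hL : 0 ≤ L)
    (hlip : ∀ u v : EuclideanSpace ℝ (Fin n),
      ‖gradient f u - gradient f v‖ ≤ L * ‖u - v‖)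
    (x y : EuclideanSpace ℝ (Fin n)) :
    f y ≤ f x + ⟪gradient f x, y - x⟫ + L / 2 * ‖y - x‖ ^ 2 := by
  set v := y - x with hv
  have hcont : Continuous (gradient f) := by
    have : LipschitzWith (Real.toNNReal L) (gradient f) := by
      apply LipschitzWith.of_dist_le_mul
      intro u w
      rw [dist_eq_norm, dist_eq_norm, Real.coe_toNNReal L hL]
      exact hlip u w
    exact this.continuous
  have hline : ∀ t : ℝ, HasDerivAt (fun t : ℝ => f (x + t • v))
      ⟪gradient f (x + t • v), v⟫ t := by
    intro t
    have h1 : HasDerivAt (fun t : ℝ => x + t • v) v t := by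
      simpa using ((hasDerivAt_id t).smul_const v).const_add x
    have h2 := (hf (x + t • v)).hasFDerivAt.comp_hasDerivAt t h1
    rw [grad_apply']
    exact h2
  have hcont2 : Continuous fun t : ℝ => ⟪gradient f (x + t • v), v⟫ := by
    exact (hcont.comp (by continuity)).inner continuous_const
  have hftc : ∫ t in (0:ℝ)..1, ⟪gradient f (x + t • v), v⟫
      = f (x + (1:ℝ) • v) - f (x + (0:ℝ) • v) :=
    intervalIntegral.integral_eq_sub_of_hasDerivAt (fun t _ => hline t)
      (hcont2.intervalIntegrable 0 1)
  have hxy : x + (1:ℝ) • v = y := by simp [hv]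
  have hx0 : x + (0:ℝ) • v = x := by simp
  rw [hxy, hx0] at hftc
  have hcont3 : Continuous fun t : ℝ => ⟪gradient f x, v⟫ + L * ‖v‖ ^ 2 * t := by continuity
  have hmono : ∫ t in (0:ℝ)..1, ⟪gradient f (x + t • v), v⟫
      ≤ ∫ t in (0:ℝ)..1, (⟪gradient f x, v⟫ + L * ‖v‖ ^ 2 * t) := by
    apply intervalIntegral.integral_mono_on (by norm_num)
      (hcont2.intervalIntegrable 0 1) (hcont3.intervalIntegrable 0 1)
    intro t ht
    rw [Set.mem_Icc] at ht
    have h1 : ⟪gradient f (x + t • v), v⟫ - ⟪gradient f x, v⟫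
        = ⟪gradient f (x + t • v) - gradient f x, v⟫ := (inner_sub_left _ _ _).symm
    have h2 := real_inner_le_norm (gradient f (x + t • v) - gradient f x) v
    have h3 := hlip (x + t • v) x
    have h4 : ‖x + t • v - x‖ = t * ‖v‖ := by
      simp [norm_smul, abs_of_nonneg ht.1]
    rw [h4] at h3
    have h5 : ‖gradient f (x + t • v) - gradient f x‖ * ‖v‖ ≤ L * t * ‖v‖ * ‖v‖ := by
      have := mul_le_mul_of_nonneg_right h3 (norm_nonneg v)
      linarith [this]
    nlinarith [norm_nonneg v, sq_nonneg ‖v‖]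
  have hrhs : ∫ t in (0:ℝ)..1, (⟪gradient f x, v⟫ + L * ‖v‖ ^ 2 * t)
      = ⟪gradient f x, v⟫ + L * ‖v‖ ^ 2 / 2 := by
    have h1 : IntervalIntegrable (fun t : ℝ => L * ‖v‖ ^ 2 * t)
        MeasureTheory.volume 0 1 := by
      exact (continuous_const.mul continuous_id').intervalIntegrable 0 1
    rw [intervalIntegral.integral_add intervalIntegrable_const h1,
      intervalIntegral.integral_const_mul, integral_id]
    simp
    ring
  rw [hftc, hrhs] at hmono
  linarith

lemma young' {s t p : ℝ} (hp : 0 < p) (hs : 0 ≤ s) (ht : 0 ≤ t) :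
    s * t ≤ p * s ^ 2 + 1 / (4 * p) * t ^ 2 := by
  rw [← sub_nonneg]
  have : p * s ^ 2 + 1 / (4 * p) * t ^ 2 - s * t = (2 * p * s - t) ^ 2 / (4 * p) := by
    field_simp
    ring
  rw [this]
  positivity

set_option maxHeartbeats 1000000 in
/-- the second line-search condition holds for all `λ ∈ (0, λ̄]`,
where `λ̄ = 2(1/2 - a - 2c)/(L + 2b + 1)`. -/
theorem stmt4 {n : ℕ}
    (f h : EuclideanSpace ℝ (Fin n) → ℝ)
    (hconv : ConvexOn ℝ Set.univ h)
    (hf : Differentiable ℝ f)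
    (L : ℝ) (hL : 0 < L)
    (hlip : ∀ u v : EuclideanSpace ℝ (Fin n),
      ‖gradient f u - gradient f v‖ ≤ L * ‖u - v‖)
    (prox : ℝ → EuclideanSpace ℝ (Fin n) → EuclideanSpace ℝ (Fin n))
    (hprox : ∀ lam : ℝ, 0 < lam → ∀ u y : EuclideanSpace ℝ (Fin n),
      1 / (2 * lam) * ‖prox lam u - u‖ ^ 2 + h (prox lam u)
        ≤ 1 / (2 * lam) * ‖y - u‖ ^ 2 + h y)
    (c a b ηg ηf : ℝ)
    (hc0 : 0 ≤ c) (hb : 0 ≤ b)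
    (ha0 : 0 < a) (ha1 : a < 1 - 4 * c)
    (hηg : 0 ≤ ηg) (hηf : 0 ≤ ηf)
    (lam : ℝ) (hlam0 : 0 < lam)
    (hlam1 : lam ≤ 2 * (1 / 2 - a - 2 * c) / (L + 2 * b + 1))
    (x g : EuclideanSpace ℝ (Fin n))
    (xlam : EuclideanSpace ℝ (Fin n)) (hxlam : xlam = prox lam (x - lam • g))
    (hgrad : ‖g - gradient f x‖ ^ 2
      ≤ ηg ^ 2 + (a ^ 2 / lam ^ 2 + b ^ 2) * ‖xlam - x‖ ^ 2)
    (fx flam : ℝ)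
    (hfx : |fx - f x| ≤ ηf + c / lam * ‖xlam - x‖ ^ 2)
    (hflam : |flam - f xlam| ≤ ηf + c / lam * ‖xlam - x‖ ^ 2) :
    flam ≤ fx + ⟪g, xlam - x⟫ + 1 / (2 * lam) * ‖xlam - x‖ ^ 2
      + (Ups1 a b lam * ηg ^ 2 + 2 * ηf) := by

  have ha := ha0.ne'
  set U := Ups1 a b lam with hUdef
  set D := ‖xlam - x‖ ^ 2 with hD
  clear_value U D
  have hDnn : 0 ≤ D := hD ▸ sq_nonneg _
  -- properties of U
  have hUfacts : 0 < U ∧ U ≤ lam / (2 * a) ∧ U * b ^ 2 ≤ b / 2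
      ∧ 1 / (4 * U) ≤ a / lam / 2 + b / 2 := by
    by_cases hb0 : b = 0
    · have hU : U = lam / (2 * a) := by simp [hUdef, Ups1, ha, hb0]
      refine ⟨by rw [hU]; positivity, le_of_eq hU, by simp [hb0], ?_⟩
      have : 1 / (4 * (lam / (2 * a))) = a / lam / 2 := by
        field_simp; ring
      rw [hU, this, hb0]
      linarith
    · have hU : U = min (lam / (2 * a)) (1 / (2 * b)) := by
        simp [hUdef, Ups1, ha, hb0]
      have hbpos : 0 < b := lt_of_le_of_ne hb (Ne.symm hb0)
      have hU0 : 0 < U := by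
        rw [hU]; exact lt_min (by positivity) (by positivity)
      refine ⟨hU0, hU ▸ min_le_left _ _, ?_, ?_⟩
      · have h1 : U ≤ 1 / (2 * b) := hU ▸ min_le_right _ _
        have := mul_le_mul_of_nonneg_right h1 (sq_nonneg b)
        have heq : 1 / (2 * b) * b ^ 2 = b / 2 := by field_simp
        linarith
      · rcases min_cases (lam / (2 * a)) (1 / (2 * b)) with ⟨hm, _⟩ | ⟨hm, _⟩
        · rw [hU, hm]
          have : 1 / (4 * (lam / (2 * a))) = a / lam / 2 := by field_simp; ring
          rw [this]; linarith
        · rw [hU, hm]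
          have : 1 / (4 * (1 / (2 * b))) = b / 2 := by field_simp; ring
          rw [this]
          have : 0 ≤ a / lam / 2 := by positivity
          linarith
  obtain ⟨hU0, hU1, hU2, hU3⟩ := hUfacts
  -- descent lemma
  have hA := descent_lemma' f hf L hL.le hlip x xlam
  rw [← hD] at hA
  -- Cauchy-Schwarz
  have hB : ⟪gradient f x, xlam - x⟫ ≤ ⟪g, xlam - x⟫
      + ‖g - gradient f x‖ * ‖xlam - x‖ := by
    have h' := (abs_le.mp (abs_real_inner_le_norm (g - gradient f x) (xlam - x))).1
    rw [inner_sub_left] at h'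
    linarith
  -- Young
  have hC : ‖g - gradient f x‖ * ‖xlam - x‖
      ≤ U * ‖g - gradient f x‖ ^ 2 + 1 / (4 * U) * D := by
    rw [hD]
    exact young' hU0 (norm_nonneg _) (norm_nonneg _)
  have hE2 : U * ‖g - gradient f x‖ ^ 2
      ≤ U * ηg ^ 2 + U * (a ^ 2 / lam ^ 2) * D + U * b ^ 2 * D := by
    have := mul_le_mul_of_nonneg_left hgrad hU0.le
    nlinarith
  have hUa : U * (a ^ 2 / lam ^ 2) ≤ a / lam / 2 := by
    have h1 := mul_le_mul_of_nonneg_right hU1 (show (0:ℝ) ≤ a ^ 2 / lam ^ 2 by positivity)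
    have heq : lam / (2 * a) * (a ^ 2 / lam ^ 2) = a / lam / 2 := by
      field_simp
    linarith
  have hcoef : 2 * c / lam + a / lam + b + L / 2 ≤ 1 / (2 * lam) := by
    have hden : 0 < L + 2 * b + 1 := by linarith
    have hlam2 : lam * (L + 2 * b + 1) ≤ 1 - 2 * a - 4 * c := by
      have := (le_div_iff₀ hden).mp hlam1
      linarith
    rw [← sub_nonneg]
    have heq : 1 / (2 * lam) - (2 * c / lam + a / lam + b + L / 2)
        = (1 - 4 * c - 2 * a - lam * (2 * b + L)) / (2 * lam) := by
      field_simp; ring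
    rw [heq]
    have hnum : 0 ≤ 1 - 4 * c - 2 * a - lam * (2 * b + L) := by nlinarith
    exact div_nonneg hnum (by linarith)
  have p1 : U * (a ^ 2 / lam ^ 2) * D ≤ a / lam / 2 * D :=
    mul_le_mul_of_nonneg_right hUa hDnn
  have p2 : U * b ^ 2 * D ≤ b / 2 * D := mul_le_mul_of_nonneg_right hU2 hDnn
  have p3 : 1 / (4 * U) * D ≤ (a / lam / 2 + b / 2) * D :=
    mul_le_mul_of_nonneg_right hU3 hDnn
  have p4 : (2 * c / lam + a / lam + b + L / 2) * D ≤ 1 / (2 * lam) * D :=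
    mul_le_mul_of_nonneg_right hcoef hDnn
  have hfx1 : f x ≤ fx + (ηf + c / lam * D) := by
    have := (abs_le.mp hfx).1; linarith
  have hfl1 : flam ≤ f xlam + (ηf + c / lam * D) := by
    have := (abs_le.mp hflam).2; linarith
  have k1 : flam ≤ f x + ⟪gradient f x, xlam - x⟫ + L / 2 * D + ηf + c / lam * D := by
    linarith [hfl1, hA]
  have k2 : flam ≤ f x + ⟪g, xlam - x⟫ + ‖g - gradient f x‖ * ‖xlam - x‖
      + L / 2 * D + ηf + c / lam * D := by linarith [k1, hB]
  have k3 : ‖g - gradient f x‖ * ‖xlam - x‖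
      ≤ U * ηg ^ 2 + (a / lam / 2 + b / 2) * D + (a / lam / 2 + b / 2) * D := by
    linarith [hC, hE2, p1, p2, p3]
  have k4 : flam ≤ fx + ⟪g, xlam - x⟫ + U * ηg ^ 2
      + (2 * c / lam + a / lam + b + L / 2) * D + 2 * ηf := by
    ring_nf at k2 k3 hfx1 ⊢
    linarith [k2, k3, hfx1]
  ring_nf at k4 p4 ⊢
  linarith [k4, p4]
end

section
/- Let θ ∈ (0,1), c ∈ [0, θ/4], η^f ≥ 0, ν ≥ 0, and λ > 0. Fix x, g ∈ ℝⁿ, put x(λ) = prox_{λh}(x − λg) and G = λ⁻¹(x − x(λ)). Suppose the inexact values fₓ, f_λ ∈ ℝ satisfy |fₓ − f(x)| ≤ η^f + (c/λ)‖x(λ) − x‖² and |f_λ − f(x(λ))| ≤ η^f + (c/λ)‖x(λ) − x‖², and that the line-search condition f_λ + h(x(λ)) ≤ fₓ + h(x) − (θ/λ)‖x(λ) − x‖² + ν holds. Then, with F = f + h, F(x(λ)) − F(x) ≤ −(θλ/2)‖G‖² + ν + 2η^f. -/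
open RealInnerProductSpace

/-- controlled descent property of `F = f + h` under the first
line-search condition with inexact function values. -/
theorem stmt6 {n : ℕ}
    (f h : EuclideanSpace ℝ (Fin n) → ℝ)
    (hconv : ConvexOn ℝ Set.univ h)
    (prox : ℝ → EuclideanSpace ℝ (Fin n) → EuclideanSpace ℝ (Fin n))
    (hprox : ∀ lam : ℝ, 0 < lam → ∀ u y : EuclideanSpace ℝ (Fin n),
      1 / (2 * lam) * ‖prox lam u - u‖ ^ 2 + h (prox lam u)
        ≤ 1 / (2 * lam) * ‖y - u‖ ^ 2 + h y)
    (θ c ηf ν : ℝ)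
    (hθ0 : 0 < θ) (hθ1 : θ < 1)
    (hc0 : 0 ≤ c) (hc1 : c ≤ θ / 4)
    (hηf : 0 ≤ ηf) (hν : 0 ≤ ν)
    (lam : ℝ) (hlam : 0 < lam)
    (x g : EuclideanSpace ℝ (Fin n))
    (xlam : EuclideanSpace ℝ (Fin n)) (hxlam : xlam = prox lam (x - lam • g))
    (G : EuclideanSpace ℝ (Fin n)) (hG : G = lam⁻¹ • (x - xlam))
    (fx flam : ℝ)
    (hfx : |fx - f x| ≤ ηf + c / lam * ‖xlam - x‖ ^ 2)
    (hflam : |flam - f xlam| ≤ ηf + c / lam * ‖xlam - x‖ ^ 2)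
    (hls : flam + h xlam ≤ fx + h x - θ / lam * ‖xlam - x‖ ^ 2 + ν)
    (F : EuclideanSpace ℝ (Fin n) → ℝ)
    (hF : ∀ y, F y = f y + h y) :
    F xlam - F x ≤ -(θ * lam / 2) * ‖G‖ ^ 2 + ν + 2 * ηf := by
  have h1 := abs_le.1 hfx
  have h2 := abs_le.1 hflam
  have hnG : ‖G‖ = lam⁻¹ * ‖xlam - x‖ := by
    rw [hG, norm_smul, norm_sub_rev, Real.norm_eq_abs,
      abs_of_pos (inv_pos.2 hlam)]
  rw [hF, hF, hnG]
  have hd : (0:ℝ) ≤ ‖xlam - x‖ ^ 2 := sq_nonneg _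
  have hli : lam * lam⁻¹ = 1 := mul_inv_cancel₀ hlam.ne'
  have hcd : c / lam ≤ θ / 4 / lam := by gcongr
  have key : -(θ * lam / 2) * (lam⁻¹ * ‖xlam - x‖) ^ 2 = -(θ / (2 * lam)) * ‖xlam - x‖ ^ 2 := by
    field_simp
  rw [key]
  have hmul := mul_le_mul_of_nonneg_right hcd hd
  have hq : θ / 4 / lam * ‖xlam - x‖ ^ 2 * 2 ≤ θ / lam * ‖xlam - x‖ ^ 2 - θ / (2 * lam) * ‖xlam - x‖ ^ 2 := by
    have : θ / 4 / lam * 2 = θ / lam - θ / (2 * lam) := by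
      field_simp; ring
    nlinarith [hd]
  linarith [h1.1, h2.2, hmul]
end

section
/- Let λ > 0, x, g ∈ ℝⁿ, p = prox_{λh}(x − λg), and fₓ, f_λ, ν ∈ ℝ. If f_λ ≤ fₓ + ⟨g, p − x⟩ + (1/(2λ))‖p − x‖² + ν, then f_λ + h(p) ≤ fₓ + h(x) − (1/(2λ))‖p − x‖² + ν. (That is, the second line-search condition implies the first one with parameter θ = 1/2.) -/
open RealInnerProductSpace

/-- the second line-search condition implies the first one with `θ = 1/2`. -/
theorem stmt7 {n : ℕ}
    (h : EuclideanSpace ℝ (Fin n) → ℝ)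
    (hconv : ConvexOn ℝ Set.univ h)
    (prox : ℝ → EuclideanSpace ℝ (Fin n) → EuclideanSpace ℝ (Fin n))
    (hprox : ∀ lam : ℝ, 0 < lam → ∀ u y : EuclideanSpace ℝ (Fin n),
      1 / (2 * lam) * ‖prox lam u - u‖ ^ 2 + h (prox lam u)
        ≤ 1 / (2 * lam) * ‖y - u‖ ^ 2 + h y)
    (lam : ℝ) (hlam : 0 < lam)
    (x g : EuclideanSpace ℝ (Fin n))
    (p : EuclideanSpace ℝ (Fin n)) (hp : p = prox lam (x - lam • g))
    (fx flam ν : ℝ)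
    (hls2 : flam ≤ fx + ⟪g, p - x⟫ + 1 / (2 * lam) * ‖p - x‖ ^ 2 + ν) :
    flam + h p ≤ fx + h x - 1 / (2 * lam) * ‖p - x‖ ^ 2 + ν := by
  set u : EuclideanSpace ℝ (Fin n) := x - lam • g with hu
  have key : ∀ t : ℝ, 0 < t → t ≤ 1 →
      h p ≤ h x + (1/lam) * ⟪p - u, x - p⟫ + t/(2*lam) * ‖x - p‖^2 := by
    intro t ht ht1
    have hprox' := hprox lam hlam u ((1-t) • p + t • x)
    rw [← hp] at hprox'
    have hyu : (1-t) • p + t • x - u = (p - u) + t • (x - p) := by module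
    have hnorm : ‖(p - u) + t • (x - p)‖^2
        = ‖p - u‖^2 + 2 * (t * ⟪p - u, x - p⟫) + t^2 * ‖x - p‖^2 := by
      rw [norm_add_sq_real, real_inner_smul_right, norm_smul, Real.norm_eq_abs, mul_pow, sq_abs]
    rw [hyu, hnorm] at hprox'
    have hconv' : h ((1-t) • p + t • x) ≤ (1-t) * h p + t * h x :=
      hconv.2 (Set.mem_univ p) (Set.mem_univ x) (by linarith) (le_of_lt ht) (by ring)
    have e : 1 / (2 * lam) * (‖p - u‖^2 + 2 * (t * ⟪p - u, x - p⟫) + t^2 * ‖x - p‖^2)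
        = 1 / (2 * lam) * ‖p - u‖^2 + t * ((1/lam) * ⟪p - u, x - p⟫) + t * (t/(2*lam) * ‖x - p‖^2) := by
      field_simp
    rw [e] at hprox'
    have hdiv : t * h p ≤ t * (h x + (1/lam) * ⟪p - u, x - p⟫ + t/(2*lam) * ‖x - p‖^2) := by
      nlinarith [hprox', hconv']
    exact le_of_mul_le_mul_left hdiv ht
  have hlim : h p ≤ h x + (1/lam) * ⟪p - u, x - p⟫ := by
    apply le_of_forall_pos_le_add
    intro ε hε
    have hD : (0:ℝ) ≤ ‖x - p‖^2 := sq_nonneg _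
    set t : ℝ := min 1 (2 * lam * ε / (‖x - p‖^2 + 1)) with htdef
    have htpos : 0 < t := lt_min one_pos (by positivity)
    have ht1 : t ≤ 1 := min_le_left _ _
    have hk := key t htpos ht1
    have hbound : t/(2*lam) * ‖x - p‖^2 ≤ ε := by
      have h1 : t ≤ 2 * lam * ε / (‖x - p‖^2 + 1) := min_le_right _ _
      have h2 : t * ‖x - p‖^2 ≤ (2 * lam * ε / (‖x - p‖^2 + 1)) * (‖x - p‖^2 + 1) := by
        nlinarith
      rw [div_mul_cancel₀] at h2
      · rw [div_mul_eq_mul_div, div_le_iff₀ (by linarith : (0:ℝ) < 2*lam)]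
        nlinarith
      · positivity
    linarith
  have hip : ⟪p - u, x - p⟫ = -‖p - x‖^2 - lam * ⟪g, p - x⟫ := by
    have : p - u = (p - x) + lam • g := by rw [hu]; module
    rw [this]
    have hxp : x - p = -(p - x) := by module
    rw [hxp, inner_add_left, inner_neg_right, inner_neg_right, real_inner_smul_left,
      real_inner_self_eq_norm_sq, real_inner_comm]
    ring
  rw [hip] at hlim
  have : h p ≤ h x - (1/lam) * ‖p - x‖^2 - ⟪g, p - x⟫ := by
    have hl : (1/lam) * (-‖p - x‖^2 - lam * ⟪g, p - x⟫) = -(1/lam) * ‖p - x‖^2 - ⟪g, p - x⟫ := by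
      field_simp
    rw [hl] at hlim
    linarith
  have h2lam : 0 < lam := hlam
  have : 1 / lam * ‖p - x‖^2 = 2 * (1 / (2*lam) * ‖p - x‖^2) := by
    field_simp
  linarith
end

section
/- Let F : ℝⁿ → ℝ satisfy F(x) ≥ F* for all x ∈ ℝⁿ, and let θ > 0 and λ̲ > 0. Suppose sequences x^i ∈ ℝⁿ, λ_i ≥ λ̲, G_i ∈ ℝⁿ, and δ_i ≥ 0 (i = 0, 1, 2, …) satisfy F(x^{i+1}) − F(x^i) ≤ −(θ λ_i / 2)‖G_i‖² + δ_i for all i, and that S = Σ_{i=0}^∞ δ_i < ∞. Then for every N ≥ 1, Σ_{i=0}^{N−1} ‖G_i‖² ≤ 2(F(x⁰) − F* + S)/(θ λ̲). -/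
open Finset

lemma sum_range_le_of_le_sub_add {u a δ : ℕ → ℝ} {m : ℝ} (hu : ∀ i, m ≤ u i)
    (hδ : ∀ i, 0 ≤ δ i) (hδs : Summable δ) (h : ∀ i, a i ≤ u i - u (i + 1) + δ i) (N : ℕ) :
    ∑ i ∈ range N, a i ≤ u 0 - m + ∑' i, δ i :=
  calc ∑ i ∈ range N, a i
      ≤ ∑ i ∈ range N, (u i - u (i + 1) + δ i) := sum_le_sum fun i _ => h i
    _ = u 0 - u N + ∑ i ∈ range N, δ i := by rw [sum_add_distrib, sum_range_sub' u]
    _ ≤ u 0 - m + ∑' i, δ i := by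
        gcongr
        · exact hu N
        · exact hδs.sum_le_tsum _ fun i _ => hδ i

/-- summing the controlled descent inequality yields a bound on the sum of
squared gradient-mapping norms. -/
theorem stmt8 {n : ℕ}
    (F : EuclideanSpace ℝ (Fin n) → ℝ) (Fstar : ℝ)
    (hF : ∀ y, Fstar ≤ F y)
    (θ lamLow : ℝ) (hθ : 0 < θ) (hlamLow : 0 < lamLow)
    (x : ℕ → EuclideanSpace ℝ (Fin n))
    (lam : ℕ → ℝ) (hlam : ∀ i, lamLow ≤ lam i)
    (G : ℕ → EuclideanSpace ℝ (Fin n))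
    (δ : ℕ → ℝ) (hδ : ∀ i, 0 ≤ δ i)
    (hdesc : ∀ i, F (x (i + 1)) - F (x i) ≤ -(θ * lam i / 2) * ‖G i‖ ^ 2 + δ i)
    (hsum : Summable δ) :
    ∀ N : ℕ, 1 ≤ N →
      ∑ i ∈ Finset.range N, ‖G i‖ ^ 2
        ≤ 2 * (F (x 0) - Fstar + ∑' i, δ i) / (θ * lamLow) := by
  intro N _
  have hstep : ∀ i, θ * lamLow / 2 * ‖G i‖ ^ 2 ≤ F (x i) - F (x (i + 1)) + δ i := fun i => by
    have : θ * lamLow * ‖G i‖ ^ 2 ≤ θ * lam i * ‖G i‖ ^ 2 := by gcongr; exact hlam i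
    linarith [hdesc i]
  have hbound := sum_range_le_of_le_sub_add (fun i => hF (x i)) hδ hsum hstep N
  rw [← mul_sum] at hbound
  rw [le_div_iff₀ (mul_pos hθ hlamLow)]
  linarith
end

section
/- Assume f is convex and differentiable. Let λ > 0, x, g ∈ ℝⁿ, x⁺ = prox_{λh}(x − λg), and ε = g − ∇f(x), and suppose that for some ν̃ ∈ ℝ one has f(x⁺) ≤ f(x) + ⟨g, x⁺ − x⟩ + (1/(2λ))‖x⁺ − x‖² + ν̃. Then, with F = f + h, for every x* ∈ ℝⁿ: F(x⁺) − F(x*) ≤ ‖ε‖ · ‖x − x*‖ + ν̃ + (1/(2λ))(‖x − x*‖² − ‖x⁺ − x*‖²). -/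
/-! Since `‖y - (x - λg)‖² / (2λ) = ⟪g, y - x⟫ + ‖y - x‖² / (2λ) + λ‖g‖² / 2`, the point `x⁺`
minimizes the linearized model `⟪g, · - x⟫ + ‖· - x‖² / (2λ) + h`, and the three-point inequality
for this model bounds `h x⁺ + ⟪g, x⁺ - x⟫ + ‖x⁺ - x‖² / (2λ)` by
`h x* + ⟪g, x* - x⟫ + (‖x - x*‖² - ‖x⁺ - x*‖²) / (2λ)`. Adding the
line-search bound on `f x⁺` and the tangent-plane bound `f x + ⟪∇f x, x* - x⟫ ≤ f x*` leaves the
gradient error only in `⟪ε, x* - x⟫ ≤ ‖ε‖ ‖x - x*‖`. -/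

open RealInnerProductSpace Set Filter Topology

section ThreePoint

variable {E : Type*} [NormedAddCommGroup E] [InnerProductSpace ℝ E]

lemma norm_sub_sub_smul_sq (x y g : E) (lam : ℝ) :
    ‖y - (x - lam • g)‖ ^ 2 = ‖y - x‖ ^ 2 + 2 * lam * ⟪g, y - x⟫ + lam ^ 2 * ‖g‖ ^ 2 := by
  rw [show y - (x - lam • g) = (y - x) + lam • g by abel, norm_add_sq_real, norm_smul,
    real_inner_smul_right, real_inner_comm, Real.norm_eq_abs, mul_pow, sq_abs]
  ring

lemma ConvexOn.three_point_of_isMinOn {s : Set E} {h : E → ℝ} (hh : ConvexOn ℝ s h) {c : ℝ}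
    {u p : E} (hp : p ∈ s) (hmin : IsMinOn (fun y ↦ c * ‖y - u‖ ^ 2 + h y) s p)
    {y : E} (hy : y ∈ s) :
    c * ‖p - u‖ ^ 2 + h p + c * ‖y - p‖ ^ 2 ≤ c * ‖y - u‖ ^ 2 + h y := by
  -- Compare `p` with `p + t • (y - p)`, divide by `t` and let `t → 0⁺`.
  have hsegment : ∀ t ∈ Ioo (0 : ℝ) 1,
      c * ‖p - u‖ ^ 2 + h p + c * (1 - t) * ‖y - p‖ ^ 2 ≤ c * ‖y - u‖ ^ 2 + h y := by
    rintro t ⟨ht0, ht1⟩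
    have hz : p + t • (y - p) = (1 - t) • p + t • y := by module
    have hconv : h (p + t • (y - p)) ≤ (1 - t) * h p + t * h y := by
      rw [hz]; exact hh.2 hp hy (by linarith) ht0.le (by ring)
    have hle := isMinOn_iff.mp hmin _ (hz ▸ hh.1 hp hy (by linarith) ht0.le (by ring))
    have hnorm_z : ‖p + t • (y - p) - u‖ ^ 2
        = ‖p - u‖ ^ 2 + 2 * t * ⟪p - u, y - p⟫ + t ^ 2 * ‖y - p‖ ^ 2 := by
      rw [show p + t • (y - p) - u = (p - u) + t • (y - p) by abel, norm_add_sq_real,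
        norm_smul, real_inner_smul_right, Real.norm_eq_abs, mul_pow, sq_abs]
      ring
    have hnorm_y : ‖y - u‖ ^ 2 = ‖p - u‖ ^ 2 + 2 * ⟪p - u, y - p⟫ + ‖y - p‖ ^ 2 := by
      rw [show y - u = (p - u) + (y - p) by abel, norm_add_sq_real]
    rw [hnorm_z] at hle
    rw [hnorm_y]
    refine le_of_mul_le_mul_left ?_ ht0
    linear_combination hle + hconv
  have hlim : Tendsto (fun t : ℝ ↦ c * ‖p - u‖ ^ 2 + h p + c * (1 - t) * ‖y - p‖ ^ 2)
      (𝓝[>] 0) (𝓝 (c * ‖p - u‖ ^ 2 + h p + c * ‖y - p‖ ^ 2)) := by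
    exact tendsto_nhdsWithin_of_tendsto_nhds ((by fun_prop : Continuous fun t : ℝ ↦
      c * ‖p - u‖ ^ 2 + h p + c * (1 - t) * ‖y - p‖ ^ 2).tendsto' 0 _ (by simp))
  exact le_of_tendsto hlim (eventually_of_mem (Ioo_mem_nhdsGT one_pos) hsegment)

end ThreePoint

lemma ConvexOn.tangent_le_of_hasFDerivAt {E : Type*} [NormedAddCommGroup E] [NormedSpace ℝ E]
    {s : Set E} {f : E → ℝ} {f' : E →L[ℝ] ℝ} {x y : E} (hfc : ConvexOn ℝ s f)
    (hf : HasFDerivAt f f' x) (hx : x ∈ s) (hy : y ∈ s) :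
    f x + f' (y - x) ≤ f y := by
  let ℓ : ℝ →ᵃ[ℝ] E := AffineMap.lineMap x y
  have hℓ0 : ℓ 0 = x := AffineMap.lineMap_apply_zero x y
  have hℓ1 : ℓ 1 = y := AffineMap.lineMap_apply_one x y
  have hderiv : HasDerivAt (f ∘ ℓ) (f' (y - x)) 0 :=
    (hℓ0 ▸ hf).comp_hasDerivAt 0 AffineMap.hasDerivAt_lineMap
  have hslope := (hfc.comp_affineMap ℓ).le_slope_of_hasDerivAt
    (show ℓ 0 ∈ s from hℓ0 ▸ hx) (show ℓ 1 ∈ s from hℓ1 ▸ hy) one_pos hderiv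
  rw [slope_def_field, Function.comp_apply, Function.comp_apply, hℓ0, hℓ1, sub_zero,
    div_one] at hslope
  linarith

/-- one-step estimate in the convex case. -/
theorem stmt10 {n : ℕ}
    (f h : EuclideanSpace ℝ (Fin n) → ℝ)
    (hconv : ConvexOn ℝ Set.univ h)
    (hfconv : ConvexOn ℝ Set.univ f)
    (hf : Differentiable ℝ f)
    (prox : ℝ → EuclideanSpace ℝ (Fin n) → EuclideanSpace ℝ (Fin n))
    (hprox : ∀ lam : ℝ, 0 < lam → ∀ u y : EuclideanSpace ℝ (Fin n),
      1 / (2 * lam) * ‖prox lam u - u‖ ^ 2 + h (prox lam u)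
        ≤ 1 / (2 * lam) * ‖y - u‖ ^ 2 + h y)
    (lam : ℝ) (hlam : 0 < lam)
    (x g : EuclideanSpace ℝ (Fin n))
    (xp : EuclideanSpace ℝ (Fin n)) (hxp : xp = prox lam (x - lam • g))
    (ε : EuclideanSpace ℝ (Fin n)) (hε : ε = g - gradient f x)
    (ν : ℝ)
    (hls : f xp ≤ f x + ⟪g, xp - x⟫ + 1 / (2 * lam) * ‖xp - x‖ ^ 2 + ν)
    (F : EuclideanSpace ℝ (Fin n) → ℝ) (hF : ∀ y, F y = f y + h y) :
    ∀ xstar : EuclideanSpace ℝ (Fin n),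
      F xp - F xstar ≤ ‖ε‖ * ‖x - xstar‖ + ν
        + 1 / (2 * lam) * (‖x - xstar‖ ^ 2 - ‖xp - xstar‖ ^ 2) := by
  intro xstar
  subst hε
  have hthree := hconv.three_point_of_isMinOn (mem_univ _)
    (isMinOn_iff.mpr fun y _ ↦ hxp ▸ hprox lam hlam (x - lam • g) y) (mem_univ xstar)
  rw [norm_sub_sub_smul_sq, norm_sub_sub_smul_sq, norm_sub_rev xstar xp] at hthree
  have htangent := hfconv.tangent_le_of_hasFDerivAt (hf x).hasFDerivAt (mem_univ x)
    (mem_univ xstar)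
  rw [← inner_gradient_left] at htangent
  have hcs := real_inner_le_norm (g - gradient f x) (xstar - x)
  rw [inner_sub_left] at hcs
  have hscale : 1 / (2 * lam) * (2 * lam) = 1 := by field_simp
  rw [hF, hF, norm_sub_rev x xstar]
  linear_combination hls + htangent + hthree + hcs + (⟪g, xstar - x⟫ - ⟪g, xp - x⟫) * hscale
end

section
/- (Convex case, sublinear rate of the averaged iterates.) Assume f is convex, differentiable, and ∇f is L-Lipschitz on ℝⁿ. Let c ∈ [0, 1/8], 0 < λ̲ ≤ λ_max, B₂ > 0, and let x* be a minimizer of F = f + h over ℝⁿ. Suppose sequences x^i, g^i ∈ ℝⁿ, λ_i ∈ [λ̲, λ_max], fᵢ, fᵢ⁺ ∈ ℝ, and η_i^g, η_i^f ≥ 0 satisfy for all i ≥ 0: x^{i+1} = prox_{λ_i h}(x^i − λ_i g^i); ‖g^i − ∇f(x^i)‖ ≤ η_i^g; |fᵢ − f(x^i)| ≤ η_i^f + (c/λ_i)‖x^{i+1} − x^i‖² and |fᵢ⁺ − f(x^{i+1})| ≤ η_i^f + (c/λ_i)‖x^{i+1} − x^i‖²; the line-search condition fᵢ⁺ ≤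 fᵢ + ⟨g^i, x^{i+1} − x^i⟩ + (1/(2λ_i))‖x^{i+1} − x^i‖² + ν_i holds with ν_i = (1/2)(η_i^g)² + 2η_i^f; Σ_{i=0}^∞ η_i^g < ∞ and Σ_{i=0}^∞ η_i^f < ∞; and ‖x^i − x*‖ ≤ B₂ for all i. Then there exists a constant Υ < ∞, independent of N, such that the averaged iterates x̄^N = (N+1)⁻¹ Σ_{i=0}^N x^i satisfy F(x̄^N) − F(x*) ≤ Υ/(N+1) for all N ≥ 0. -/
/-!
For a step `x' = prox_{λh}(x - λg)`, the variational inequality of the prox combined with the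
inexact line-search bound gives, for every `y`,
`λ F(x') ≤ λ (f x + ⟪g, y - x⟫ + h y + ε) + ⟪x' - x, y - x'⟫ + (1 + 4c)/2 ‖x' - x‖²`.
Taking `y = x` yields sufficient decrease `‖x' - x‖² ≤ 4λ (F x - F x' + ε)`, because `c ≤ 1/8`.
Taking `y = x*`, the gradient inequality of the convex `f` and this decrease (which absorbs the
`c`-term) show that `V_i = λ_max F(x_i) + ‖x_i - x*‖² / 2` drops by at least
`λ_low (F(x_{i+1}) - F(x*))` up to a summable error. Telescoping bounds
`∑_{i ≤ N} (F(x_i) - F(x*))` independently of `N`, and Jensen's inequality passes the bound to the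
averaged iterate.
-/

open RealInnerProductSpace Set Filter Topology Finset

theorem nonpos_of_forall_le_mul {a b : ℝ} (h : ∀ t : ℝ, 0 < t → t ≤ 1 → a ≤ t * b) : a ≤ 0 := by
  have hlim : Tendsto (fun t : ℝ => t * b) (𝓝[>] 0) (𝓝 0) := by
    simpa using ((continuous_mul_const b).tendsto 0).mono_left nhdsWithin_le_nhds
  exact ge_of_tendsto hlim (by
    filter_upwards [Ioc_mem_nhdsGT one_pos] with t ht using h t ht.1 ht.2)

theorem Summable.sq_of_nonneg {a : ℕ → ℝ} (ha : Summable a) (ha0 : ∀ i, 0 ≤ a i) :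
    Summable fun i => a i ^ 2 :=
  (ha.mul_left (∑' i, a i)).of_nonneg_of_le (fun i => sq_nonneg _)
    fun i => by rw [sq]; exact mul_le_mul_of_nonneg_right (ha.le_tsum i fun j _ => ha0 j) (ha0 i)

theorem sum_range_le_tsum_of_le_add_sub {w e V : ℕ → ℝ} {m : ℝ}
    (hstep : ∀ i, w i ≤ e i + (V i - V (i + 1))) (hV : ∀ i, m ≤ V i) (he : Summable e)
    (he0 : ∀ i, 0 ≤ e i) (N : ℕ) :
    ∑ i ∈ range N, w i ≤ ∑' i, e i + (V 0 - m) := by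
  calc ∑ i ∈ range N, w i ≤ ∑ i ∈ range N, (e i + (V i - V (i + 1))) :=
        sum_le_sum fun i _ => hstep i
    _ = ∑ i ∈ range N, e i + (V 0 - V N) := by rw [sum_add_distrib, sum_range_sub']
    _ ≤ ∑' i, e i + (V 0 - m) := by
        gcongr
        · exact he.sum_le_tsum _ fun i _ => he0 i
        · exact hV N

theorem ConvexOn.map_finset_average_le {ι E : Type*} [AddCommGroup E] [Module ℝ E] {s : Set E}
    {F : E → ℝ} (hF : ConvexOn ℝ s F) {t : Finset ι} (ht : t.Nonempty) {x : ι → E}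
    (hx : ∀ i ∈ t, x i ∈ s) :
    F ((#t : ℝ)⁻¹ • ∑ i ∈ t, x i) ≤ (∑ i ∈ t, F (x i)) / #t := by
  have := hF.map_centerMass_le (t := t) (w := fun _ => (1 : ℝ)) (p := x)
    (fun _ _ => zero_le_one) (by simpa using ht) hx
  simpa [Finset.centerMass, div_eq_inv_mul] using this

theorem ConvexOn.map_average_range_sub_le {E : Type*} [AddCommGroup E] [Module ℝ E]
    {F : E → ℝ} (hF : ConvexOn ℝ univ F) (x : ℕ → E) (m : ℝ) (N : ℕ) :
    F (((N : ℝ) + 1)⁻¹ • ∑ i ∈ range (N + 1), x i) - m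
      ≤ (∑ i ∈ range (N + 1), (F (x i) - m)) / (N + 1) := by
  have hJensen :=
    hF.map_finset_average_le (nonempty_range_add_one (n := N)) fun i _ => mem_univ (x i)
  rw [card_range, Nat.cast_add_one] at hJensen
  rw [sum_sub_distrib, sum_const, card_range, nsmul_eq_mul, sub_div, Nat.cast_add_one,
    mul_div_cancel_left₀ _ (by positivity)]
  linarith

variable {E : Type*} [NormedAddCommGroup E] [InnerProductSpace ℝ E]

theorem ConvexOn.add_inner_gradient_le [CompleteSpace E] {f : E → ℝ} (hf : ConvexOn ℝ univ f)
    {x : E} (hfx : DifferentiableAt ℝ f x) (y : E) :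
    f x + ⟪gradient f x, y - x⟫ ≤ f y := by
  have hline : ConvexOn ℝ univ (f ∘ AffineMap.lineMap (k := ℝ) x y) := by
    simpa using hf.comp_affineMap (AffineMap.lineMap x y)
  have hderiv : HasDerivAt (f ∘ AffineMap.lineMap (k := ℝ) x y) ⟪gradient f x, y - x⟫ 0 := by
    have := hfx.hasGradientAt.hasFDerivAt.comp_hasDerivAt_of_eq (0 : ℝ)
      (AffineMap.hasDerivAt_lineMap (a := x) (b := y) (x := 0)) (by simp)
    simpa [InnerProductSpace.toDual_apply_apply] using this
  have := hline.le_slope_of_hasDerivAt (mem_univ 0) (mem_univ 1) one_pos hderiv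
  rw [slope_def_field] at this
  simp only [Function.comp_apply, AffineMap.lineMap_apply_one, AffineMap.lineMap_apply_zero,
    sub_zero, div_one] at this
  linarith

theorem norm_add_smul_sq (a b : E) (t : ℝ) :
    ‖a + t • b‖ ^ 2 = ‖a‖ ^ 2 + 2 * t * ⟪a, b⟫ + t ^ 2 * ‖b‖ ^ 2 := by
  rw [norm_add_sq_real, real_inner_smul_right, norm_smul, Real.norm_eq_abs, mul_pow, sq_abs]
  ring

def IsProx (h : E → ℝ) (lam : ℝ) (u p : E) : Prop :=
  ∀ y, 1 / (2 * lam) * ‖p - u‖ ^ 2 + h p ≤ 1 / (2 * lam) * ‖y - u‖ ^ 2 + h y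

theorem IsProx.mul_add_inner_le {h : E → ℝ} (hh : ConvexOn ℝ univ h) {lam : ℝ} (hlam : 0 < lam)
    {u p : E} (hp : IsProx h lam u p) (y : E) :
    lam * h p + ⟪p - u, p - y⟫ ≤ lam * h y := by
  refine sub_nonpos.1 (nonpos_of_forall_le_mul (b := ‖y - p‖ ^ 2 / 2) fun t ht0 ht1 => ?_)
  -- compare `p` with the competitor `p + t • (y - p)` and bound `h` there by convexity
  have hmin := hp (p + t • (y - p))
  have hconv := hh.2 (mem_univ p) (mem_univ y) (sub_nonneg.2 ht1) ht0.le (sub_add_cancel 1 t)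
  rw [show (1 - t) • p + t • y = p + t • (y - p) by module, smul_eq_mul, smul_eq_mul] at hconv
  rw [show p + t • (y - p) - u = (p - u) + t • (y - p) by abel, norm_add_smul_sq] at hmin
  field_simp at hmin
  have key : 2 * lam * (h p - h y) ≤ 2 * ⟪p - u, y - p⟫ + t * ‖y - p‖ ^ 2 := by
    refine le_of_mul_le_mul_left ?_ ht0
    linarith [mul_le_mul_of_nonneg_left hconv (by positivity : (0 : ℝ) ≤ 2 * lam)]
  have hinner : ⟪p - u, p - y⟫ = -⟪p - u, y - p⟫ := by rw [← inner_neg_right, neg_sub]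
  linarith

theorem mul_le_of_inexact_line_search {f : E → ℝ} {lam c ηg ηf φ φ' : ℝ} (hlam : 0 < lam)
    {x x' g : E} (hφ : |φ - f x| ≤ ηf + c / lam * ‖x' - x‖ ^ 2)
    (hφ' : |φ' - f x'| ≤ ηf + c / lam * ‖x' - x‖ ^ 2)
    (hls : φ' ≤ φ + ⟪g, x' - x⟫ + 1 / (2 * lam) * ‖x' - x‖ ^ 2 + (1 / 2 * ηg ^ 2 + 2 * ηf)) :
    lam * f x' ≤ lam * (f x + ⟪g, x' - x⟫ + (1 / 2 * ηg ^ 2 + 4 * ηf))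
      + (1 + 4 * c) / 2 * ‖x' - x‖ ^ 2 := by
  have hdesc : f x' ≤ f x + ⟪g, x' - x⟫ + (1 / 2 * ηg ^ 2 + 4 * ηf)
      + (1 / (2 * lam) + 2 * (c / lam)) * ‖x' - x‖ ^ 2 := by
    linarith [(abs_le.1 hφ).2, (abs_le.1 hφ').1]
  calc lam * f x' ≤ lam * (f x + ⟪g, x' - x⟫ + (1 / 2 * ηg ^ 2 + 4 * ηf)
        + (1 / (2 * lam) + 2 * (c / lam)) * ‖x' - x‖ ^ 2) := by gcongr
    _ = _ := by field_simp; ring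

section ProxGradStep

variable {f h : E → ℝ} {lam c ε : ℝ} {x x' g : E}

theorem prox_grad_step_le (hh : ConvexOn ℝ univ h) (hlam : 0 < lam)
    (hprox : IsProx h lam (x - lam • g) x')
    (hdesc : lam * f x' ≤ lam * (f x + ⟪g, x' - x⟫ + ε) + (1 + 4 * c) / 2 * ‖x' - x‖ ^ 2)
    (y : E) :
    lam * (f x' + h x') ≤ lam * (f x + ⟪g, y - x⟫ + h y + ε) + ⟪x' - x, y - x'⟫
      + (1 + 4 * c) / 2 * ‖x' - x‖ ^ 2 := by
  have hp := hprox.mul_add_inner_le hh hlam y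
  have hsplit : ⟪x' - (x - lam • g), x' - y⟫
      = lam * (⟪g, x' - x⟫ - ⟪g, y - x⟫) - ⟪x' - x, y - x'⟫ := by
    simp only [inner_sub_left, inner_sub_right, real_inner_smul_left]
    ring
  linarith

theorem prox_grad_step_sq_norm_le (hh : ConvexOn ℝ univ h) (hlam : 0 < lam) (hc : c ≤ 1 / 8)
    (hprox : IsProx h lam (x - lam • g) x')
    (hdesc : lam * f x' ≤ lam * (f x + ⟪g, x' - x⟫ + ε) + (1 + 4 * c) / 2 * ‖x' - x‖ ^ 2) :
    ‖x' - x‖ ^ 2 ≤ 4 * lam * (f x + h x - (f x' + h x') + ε) := by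
  have hK := prox_grad_step_le hh hlam hprox hdesc x
  rw [sub_self, inner_zero_right, ← neg_sub x' x, inner_neg_right,
    real_inner_self_eq_norm_sq] at hK
  linarith [mul_nonneg (sub_nonneg.2 hc) (sq_nonneg ‖x' - x‖)]

theorem prox_grad_step_sub_le [CompleteSpace E] (hf : ConvexOn ℝ univ f)
    (hfx : DifferentiableAt ℝ f x) (hh : ConvexOn ℝ univ h) {ηg B : ℝ} {z : E} (hlam : 0 < lam)
    (hc : c ≤ 1 / 8) (hg : ‖g - gradient f x‖ ≤ ηg) (hB : ‖x - z‖ ≤ B)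
    (hprox : IsProx h lam (x - lam • g) x')
    (hdesc : lam * f x' ≤ lam * (f x + ⟪g, x' - x⟫ + ε) + (1 + 4 * c) / 2 * ‖x' - x‖ ^ 2) :
    lam * (f x' + h x' - (f z + h z)) ≤ lam * (ηg * B + 2 * ε + (f x + h x - (f x' + h x')))
      + (‖x - z‖ ^ 2 - ‖x' - z‖ ^ 2) / 2 := by
  have hK := prox_grad_step_le hh hlam hprox hdesc z
  have hgrad := hf.add_inner_gradient_le hfx z
  have hCS : ⟪g, z - x⟫ - ⟪gradient f x, z - x⟫ ≤ ηg * B := by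
    rw [← inner_sub_left]
    exact (real_inner_le_norm _ _).trans (mul_le_mul hg (by rwa [norm_sub_rev])
      (norm_nonneg _) ((norm_nonneg _).trans hg))
  have hdist : 2 * ⟪x' - x, z - x'⟫ = ‖x - z‖ ^ 2 - ‖x' - z‖ ^ 2 - ‖x' - x‖ ^ 2 := by
    rw [show x - z = (x' - z) - (x' - x) by abel, norm_sub_sq_real,
      show z - x' = -(x' - z) by abel, inner_neg_right, real_inner_comm]
    ring
  have hcQ : 2 * c * ‖x' - x‖ ^ 2 ≤ lam * (f x + h x - (f x' + h x') + ε) := by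
    linarith [prox_grad_step_sq_norm_le hh hlam hc hprox hdesc,
      mul_nonneg (sub_nonneg.2 hc) (sq_nonneg ‖x' - x‖)]
  linarith [mul_le_mul_of_nonneg_left hgrad hlam.le, mul_le_mul_of_nonneg_left hCS hlam.le]

theorem prox_grad_step_lyapunov [CompleteSpace E] (hf : ConvexOn ℝ univ f)
    (hfx : DifferentiableAt ℝ f x) (hh : ConvexOn ℝ univ h) {lamLow lamMax ηg B : ℝ} {z : E}
    (hlam : 0 < lam) (hlamLow : lamLow ≤ lam) (hlamMax : lam ≤ lamMax) (hc : c ≤ 1 / 8)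
    (hε : 0 ≤ ε) (hg : ‖g - gradient f x‖ ≤ ηg) (hB : ‖x - z‖ ≤ B)
    (hz : f z + h z ≤ f x' + h x') (hprox : IsProx h lam (x - lam • g) x')
    (hdesc : lam * f x' ≤ lam * (f x + ⟪g, x' - x⟫ + ε) + (1 + 4 * c) / 2 * ‖x' - x‖ ^ 2) :
    lamLow * (f x' + h x' - (f z + h z)) ≤ lamMax * (ηg * B + 2 * ε)
      + ((lamMax * (f x + h x) + ‖x - z‖ ^ 2 / 2)
        - (lamMax * (f x' + h x') + ‖x' - z‖ ^ 2 / 2)) := by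
  have hB0 : 0 ≤ ηg * B := mul_nonneg ((norm_nonneg _).trans hg) ((norm_nonneg _).trans hB)
  have hdecr : 0 ≤ f x + h x - (f x' + h x') + ε := by
    have hQ := (sq_nonneg ‖x' - x‖).trans (prox_grad_step_sq_norm_le hh hlam hc hprox hdesc)
    exact nonneg_of_mul_nonneg_right hQ (by positivity)
  have hgap : 0 ≤ ηg * B + 2 * ε + (f x + h x - (f x' + h x')) := by linarith
  calc lamLow * (f x' + h x' - (f z + h z)) ≤ lam * (f x' + h x' - (f z + h z)) := by
        gcongr
    _ ≤ lam * (ηg * B + 2 * ε + (f x + h x - (f x' + h x')))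
          + (‖x - z‖ ^ 2 - ‖x' - z‖ ^ 2) / 2 :=
        prox_grad_step_sub_le hf hfx hh hlam hc hg hB hprox hdesc
    _ ≤ lamMax * (ηg * B + 2 * ε + (f x + h x - (f x' + h x')))
          + (‖x - z‖ ^ 2 - ‖x' - z‖ ^ 2) / 2 := by gcongr
    _ = _ := by ring

end ProxGradStep

theorem stmt11_general {n : ℕ}
    (f h : EuclideanSpace ℝ (Fin n) → ℝ)
    (hconv : ConvexOn ℝ Set.univ h)
    (hfconv : ConvexOn ℝ Set.univ f)
    (hf : Differentiable ℝ f)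
    (prox : ℝ → EuclideanSpace ℝ (Fin n) → EuclideanSpace ℝ (Fin n))
    (hprox : ∀ lam : ℝ, 0 < lam → ∀ u y : EuclideanSpace ℝ (Fin n),
      1 / (2 * lam) * ‖prox lam u - u‖ ^ 2 + h (prox lam u)
        ≤ 1 / (2 * lam) * ‖y - u‖ ^ 2 + h y)
    (c lamLow lamMax B2 : ℝ)
    (hc1 : c ≤ 1 / 8)
    (hlamLow : 0 < lamLow)
    (F : EuclideanSpace ℝ (Fin n) → ℝ) (hF : ∀ y, F y = f y + h y)
    (xstar : EuclideanSpace ℝ (Fin n)) (hxstar : ∀ y, F xstar ≤ F y)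
    (x g : ℕ → EuclideanSpace ℝ (Fin n))
    (lam ηg ηf : ℕ → ℝ) (fi fip : ℕ → ℝ)
    (hlam : ∀ i, lam i ∈ Set.Icc lamLow lamMax)
    (hηg : ∀ i, 0 ≤ ηg i) (hηf : ∀ i, 0 ≤ ηf i)
    (hupd : ∀ i, x (i + 1) = prox (lam i) (x i - lam i • g i))
    (hgrad : ∀ i, ‖g i - gradient f (x i)‖ ≤ ηg i)
    (hfi : ∀ i, |fi i - f (x i)| ≤ ηf i + c / lam i * ‖x (i + 1) - x i‖ ^ 2)
    (hfip : ∀ i, |fip i - f (x (i + 1))| ≤ ηf i + c / lam i * ‖x (i + 1) - x i‖ ^ 2)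
    (hls : ∀ i, fip i ≤ fi i + ⟪g i, x (i + 1) - x i⟫
      + 1 / (2 * lam i) * ‖x (i + 1) - x i‖ ^ 2
      + (1 / 2 * (ηg i) ^ 2 + 2 * ηf i))
    (hsumg : Summable ηg) (hsumf : Summable ηf)
    (hbd : ∀ i, ‖x i - xstar‖ ≤ B2) :
    ∃ Ups : ℝ, ∀ N : ℕ,
      F (((N : ℝ) + 1)⁻¹ • ∑ i ∈ Finset.range (N + 1), x i) - F xstar
        ≤ Ups / ((N : ℝ) + 1) := by
  have hFconv : ConvexOn ℝ univ F := by
    rw [show F = f + h from funext hF]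
    exact hfconv.add hconv
  have hlamMax : 0 ≤ lamMax := hlamLow.le.trans ((hlam 0).1.trans (hlam 0).2)
  have hB2 : 0 ≤ B2 := (norm_nonneg _).trans (hbd 0)
  set e : ℕ → ℝ := fun i => lamMax * (ηg i * B2 + 2 * (1 / 2 * ηg i ^ 2 + 4 * ηf i))
  have he : Summable e :=
    ((hsumg.mul_right B2).add ((((hsumg.sq_of_nonneg hηg).mul_left _).add
      (hsumf.mul_left 4)).mul_left 2)).mul_left lamMax
  have he0 : ∀ i, 0 ≤ e i := fun i => by have := hηg i; have := hηf i; positivity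
  set V : ℕ → ℝ := fun i => lamMax * F (x i) + ‖x i - xstar‖ ^ 2 / 2
  have hV : ∀ i, lamMax * F xstar ≤ V i := fun i => by
    have := mul_le_mul_of_nonneg_left (hxstar (x i)) hlamMax
    have : 0 ≤ ‖x i - xstar‖ ^ 2 / 2 := by positivity
    simp only [V]
    linarith
  have hstep : ∀ i, lamLow * (F (x (i + 1)) - F xstar) ≤ e i + (V i - V (i + 1)) := fun i => by
    have hlam0 : 0 < lam i := hlamLow.trans_le (hlam i).1
    simp only [e, V, hF]
    exact prox_grad_step_lyapunov hfconv (hf _) hconv hlam0 (hlam i).1 (hlam i).2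
      hc1 (by have := hηf i; positivity) (hgrad i) (hbd i) (by simpa only [hF] using hxstar _)
      (hupd i ▸ hprox _ hlam0 _) (mul_le_of_inexact_line_search hlam0 (hfi i) (hfip i) (hls i))
  set C := (∑' i, e i + (V 0 - lamMax * F xstar)) / lamLow + (F (x 0) - F xstar)
  have hsum : ∀ N, ∑ i ∈ range (N + 1), (F (x i) - F xstar) ≤ C := fun N => by
    have hN := sum_range_le_tsum_of_le_add_sub hstep hV he he0 N
    rw [← mul_sum, ← le_div_iff₀' hlamLow] at hN
    rw [sum_range_succ']
    linarith
  exact ⟨C, fun N => (hFconv.map_average_range_sub_le x _ N).trans (by gcongr; exact hsum N)⟩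

/-- convex case, sublinear `O(1/N)` rate of the averaged iterates of the
adaptive proximal inexact gradient method. -/
theorem stmt11 {n : ℕ}
    (f h : EuclideanSpace ℝ (Fin n) → ℝ)
    (hconv : ConvexOn ℝ Set.univ h)
    (hfconv : ConvexOn ℝ Set.univ f)
    (hf : Differentiable ℝ f)
    (L : ℝ) (hL : 0 < L)
    (hlip : ∀ u v : EuclideanSpace ℝ (Fin n),
      ‖gradient f u - gradient f v‖ ≤ L * ‖u - v‖)
    (prox : ℝ → EuclideanSpace ℝ (Fin n) → EuclideanSpace ℝ (Fin n))
    (hprox : ∀ lam : ℝ, 0 < lam → ∀ u y : EuclideanSpace ℝ (Fin n),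
      1 / (2 * lam) * ‖prox lam u - u‖ ^ 2 + h (prox lam u)
        ≤ 1 / (2 * lam) * ‖y - u‖ ^ 2 + h y)
    (c lamLow lamMax B2 : ℝ)
    (hc0 : 0 ≤ c) (hc1 : c ≤ 1 / 8)
    (hlamLow : 0 < lamLow) (hord : lamLow ≤ lamMax) (hB2 : 0 < B2)
    (F : EuclideanSpace ℝ (Fin n) → ℝ) (hF : ∀ y, F y = f y + h y)
    (xstar : EuclideanSpace ℝ (Fin n)) (hxstar : ∀ y, F xstar ≤ F y)
    (x g : ℕ → EuclideanSpace ℝ (Fin n))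
    (lam ηg ηf : ℕ → ℝ) (fi fip : ℕ → ℝ)
    (hlam : ∀ i, lam i ∈ Set.Icc lamLow lamMax)
    (hηg : ∀ i, 0 ≤ ηg i) (hηf : ∀ i, 0 ≤ ηf i)
    (hupd : ∀ i, x (i + 1) = prox (lam i) (x i - lam i • g i))
    (hgrad : ∀ i, ‖g i - gradient f (x i)‖ ≤ ηg i)
    (hfi : ∀ i, |fi i - f (x i)| ≤ ηf i + c / lam i * ‖x (i + 1) - x i‖ ^ 2)
    (hfip : ∀ i, |fip i - f (x (i + 1))| ≤ ηf i + c / lam i * ‖x (i + 1) - x i‖ ^ 2)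
    (hls : ∀ i, fip i ≤ fi i + ⟪g i, x (i + 1) - x i⟫
      + 1 / (2 * lam i) * ‖x (i + 1) - x i‖ ^ 2
      + (1 / 2 * (ηg i) ^ 2 + 2 * ηf i))
    (hsumg : Summable ηg) (hsumf : Summable ηf)
    (hbd : ∀ i, ‖x i - xstar‖ ≤ B2) :
    ∃ Ups : ℝ, ∀ N : ℕ,
      F (((N : ℝ) + 1)⁻¹ • ∑ i ∈ Finset.range (N + 1), x i) - F xstar
        ≤ Ups / ((N : ℝ) + 1) :=
  stmt11_general f h hconv hfconv hf prox hprox c lamLow lamMax B2 hc1 hlamLow F hF xstar hxstar x g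
    lam ηg ηf fi fip hlam hηg hηf hupd hgrad hfi hfip hls hsumg hsumf hbd
end

section
/- (Convex case with error-free line search, accelerated-then-sublinear rate.) Assume f is convex, differentiable, and ∇f is L-Lipschitz on ℝⁿ. Let θ ∈ (0,1), a ∈ [0,1), b ≥ 0, 0 < λ̲ ≤ λ_max, B₂ > 0, and let x* be a minimizer of F = f + h over ℝⁿ. Suppose sequences x^i, g^i ∈ ℝⁿ and λ_i ∈ [λ̲, λ_max] satisfy for all i ≥ 0: x^{i+1} = prox_{λ_i h}(x^i − λ_i g^i); ‖g^i − ∇f(x^i)‖² ≤ (a²/λ_i² + b²)‖x^{i+1} − x^i‖²; F(x^{i+1}) − F(x^i) ≤ −(θ λ_i / 2)‖G_{λ_i}(x^i, g^i)‖²; and ‖x^i − x*‖ ≤ B₂. Then for every N ≥ 2, F(x^N) − F(x*) ≤ max{ (1/√2)^{N−1}(F(x⁰) − F(x*)), 8Υ₄²/(θ λ̲ (N−1)) }, where Υ₄ = B₂((L + b)λ_max + a + 1). -/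
/-!
Write `δᵢ = F xᵢ - F x⋆` and `Gᵢ = λᵢ⁻¹ (xᵢ - xᵢ₊₁)`. The optimality condition of the prox step
and the gradient inequality for `f` make `∇f xᵢ₊₁ + Gᵢ - gᵢ` a subgradient of `F` at `xᵢ₊₁`; the
Lipschitz bound and the inexactness bound give it norm at most `((L + b) λᵢ + a + 1) ‖Gᵢ‖`, so
`δᵢ₊₁ ≤ Υ ‖Gᵢ‖`. Together with sufficient decrease this gives `δᵢ₊₁ + c δᵢ₊₁² ≤ δᵢ` with
`c = θ λ̲ / (2 Υ²)`. Each step of that recurrence either halves `δ` or raises `1 / δ` by `c / 2`,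
and among the first `N` steps one kind occurs at least `(N - 1) / 2` times.
-/

open RealInnerProductSpace Set Filter Topology

theorem ConvexOn.le_sub_of_hasFDerivAt {E : Type*} [NormedAddCommGroup E] [NormedSpace ℝ E]
    {s : Set E} {f : E → ℝ} {f' : E →L[ℝ] ℝ} {x y : E} (hf : ConvexOn ℝ s f) (hx : x ∈ s)
    (hy : y ∈ s) (hf' : HasFDerivAt f f' x) : f' (y - x) ≤ f y - f x := by
  let ℓ : ℝ →ᵃ[ℝ] E := AffineMap.lineMap x y
  have hφ : ConvexOn ℝ (Icc 0 1) (f ∘ ℓ) :=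
    (hf.comp_affineMap ℓ).subset (fun _ ht => hf.1.lineMap_mem hx hy ht) (convex_Icc 0 1)
  have hφ' : HasDerivAt (f ∘ ℓ) (f' (y - x)) 0 := by
    refine HasFDerivAt.comp_hasDerivAt (0 : ℝ) ?_ AffineMap.hasDerivAt_lineMap
    simpa [ℓ] using hf'
  simpa [slope_def_field, ℓ] using
    hφ.le_slope_of_hasDerivAt (by simp) (by simp) zero_lt_one hφ'

theorem ConvexOn.inner_gradient_le_sub {E : Type*} [NormedAddCommGroup E] [InnerProductSpace ℝ E]
    [CompleteSpace E] {s : Set E} {f : E → ℝ} {x y : E} (hf : ConvexOn ℝ s f) (hx : x ∈ s)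
    (hy : y ∈ s) (hd : DifferentiableAt ℝ f x) : ⟪gradient f x, y - x⟫ ≤ f y - f x := by
  simpa using hf.le_sub_of_hasFDerivAt hx hy hd.hasGradientAt.hasFDerivAt

theorem le_of_forall_Ioc_le_add_mul {A B C : ℝ} (h : ∀ t ∈ Ioc (0 : ℝ) 1, A ≤ B + t * C) :
    A ≤ B := by
  have hlim : Tendsto (fun t : ℝ => B + t * C) (𝓝[>] 0) (𝓝 B) := by
    have : Tendsto (fun t : ℝ => B + t * C) (𝓝 0) (𝓝 (B + 0 * C)) :=
      (continuous_const.add (continuous_id.mul continuous_const)).tendsto 0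
    simpa using this.mono_left nhdsWithin_le_nhds
  exact ge_of_tendsto hlim (eventually_of_mem (Ioc_mem_nhdsGT one_pos) h)

theorem inner_sub_le_of_isMinOn_prox {E : Type*} [NormedAddCommGroup E] [InnerProductSpace ℝ E]
    {s : Set E} {h : E → ℝ} {lam : ℝ} {u p y : E} (hh : ConvexOn ℝ s h) (hlam : 0 < lam)
    (hp : p ∈ s) (hy : y ∈ s)
    (hmin : IsMinOn (fun z => 1 / (2 * lam) * ‖z - u‖ ^ 2 + h z) s p) :
    ⟪u - p, y - p⟫ ≤ lam * (h y - h p) := by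
  refine le_of_forall_Ioc_le_add_mul (C := ‖y - p‖ ^ 2 / 2) fun t ht => ?_
  have hts : t ∈ Icc (0 : ℝ) 1 := Ioc_subset_Icc_self ht
  have hconv : h (AffineMap.lineMap p y t) ≤ (1 - t) * h p + t * h y := by
    simpa [AffineMap.lineMap_apply_module] using
      hh.2 hp hy (sub_nonneg.2 hts.2) hts.1 (sub_add_cancel 1 t)
  have hnorm : ‖AffineMap.lineMap p y t - u‖ ^ 2
      = ‖p - u‖ ^ 2 - 2 * t * ⟪u - p, y - p⟫ + t ^ 2 * ‖y - p‖ ^ 2 := by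
    rw [AffineMap.lineMap_apply, vsub_eq_sub, vadd_eq_add,
      show t • (y - p) + p - u = (p - u) + t • (y - p) by abel, norm_add_sq_real,
      inner_smul_right, norm_smul, mul_pow, Real.norm_eq_abs, sq_abs, ← neg_sub u p, inner_neg_left]
    ring
  have hle := isMinOn_iff.1 hmin _ (hh.1.lineMap_mem hp hy hts)
  simp only [hnorm] at hle
  have hmul : 0 ≤ t * (lam * (h y - h p) + t * (‖y - p‖ ^ 2 / 2) - ⟪u - p, y - p⟫) := by
    have h2 : 0 < 2 * lam := by positivity
    field_simp at hle
    nlinarith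
  linarith [nonneg_of_mul_nonneg_right hmul ht.1]

theorem two_mul_le_or_one_div_add_le {c d d' : ℝ} (hc : 0 ≤ c) (hd' : 0 < d')
    (h : d' + c * d' ^ 2 ≤ d) : 2 * d' ≤ d ∨ 1 / d + c / 2 ≤ 1 / d' := by
  refine (le_or_gt (2 * d') d).imp id fun hlt => ?_
  have hd : 0 < d := by nlinarith
  rw [div_add_div _ _ hd.ne' two_ne_zero, div_le_div_iff₀ (by positivity) hd']
  nlinarith [mul_le_mul_of_nonneg_left hlt.le (mul_nonneg hc hd'.le)]

section SqRecurrence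

variable {c : ℝ} {δ : ℕ → ℝ}

theorem exists_halvings_of_sq_recurrence (hc : 0 ≤ c)
    (hrec : ∀ i, δ (i + 1) + c * δ (i + 1) ^ 2 ≤ δ i) :
    ∀ M, 0 < δ M → ∃ k ≤ M, δ M ≤ (1 / 2) ^ k * δ 0 ∧ ((M : ℝ) - k) * (c / 2) ≤ 1 / δ M
  | 0, hpos => ⟨0, le_rfl, by simp, by simpa using hpos.le⟩
  | m + 1, hpos => by
    have hle : δ (m + 1) ≤ δ m := by nlinarith [hrec m]
    obtain ⟨k, hkm, hhalf, hinv⟩ :=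
      exists_halvings_of_sq_recurrence hc hrec m (hpos.trans_le hle)
    rcases two_mul_le_or_one_div_add_le hc hpos (hrec m) with h2 | h2
    · refine ⟨k + 1, by omega, ?_, ?_⟩
      · rw [pow_succ]
        nlinarith
      · have := one_div_le_one_div_of_le hpos hle
        push_cast
        linarith
    · exact ⟨k, by omega, hle.trans hhalf, by push_cast; linarith⟩

theorem sq_recurrence_rate (hc : 0 < c) (hrec : ∀ i, δ (i + 1) + c * δ (i + 1) ^ 2 ≤ δ i)
    {N : ℕ} (hN : 2 ≤ N) :
    δ N ≤ max ((1 / √2) ^ (N - 1) * δ 0) (4 / (c * ((N : ℝ) - 1))) := by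
  have hN' : (2 : ℝ) ≤ N := by exact_mod_cast hN
  rcases le_or_gt (δ N) 0 with hnonpos | hpos
  · exact le_max_of_le_right (hnonpos.trans (div_nonneg (by norm_num) (by nlinarith)))
  obtain ⟨k, -, hhalf, hinv⟩ := exists_halvings_of_sq_recurrence hc.le hrec N hpos
  rcases le_or_gt (N - 1) (2 * k) with hk | hk
  · have hδ0 : 0 ≤ δ 0 := nonneg_of_mul_nonneg_right (hpos.trans_le hhalf).le (by positivity)
    have hsq : (1 / √2 : ℝ) ^ 2 = 1 / 2 := by rw [div_pow, one_pow, Real.sq_sqrt zero_le_two]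
    refine le_max_of_le_left ?_
    calc δ N ≤ (1 / 2) ^ k * δ 0 := hhalf
      _ = (1 / √2) ^ (2 * k) * δ 0 := by rw [pow_mul, hsq]
      _ ≤ (1 / √2) ^ (N - 1) * δ 0 := by
        have hle1 : 1 / √2 ≤ 1 := div_le_one_of_le₀ Real.one_lt_sqrt_two.le (Real.sqrt_nonneg 2)
        exact mul_le_mul_of_nonneg_right (pow_le_pow_of_le_one (by positivity) hle1 hk) hδ0
  · have hk' : (2 * k + 2 : ℝ) ≤ N := by exact_mod_cast (by omega : 2 * k + 2 ≤ N)
    refine le_max_of_le_right ?_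
    rw [le_div_iff₀ (by nlinarith)]
    have := mul_le_mul_of_nonneg_left hinv hpos.le
    rw [mul_one_div_cancel hpos.ne'] at this
    nlinarith

end SqRecurrence

section ProxGradStep

variable {E : Type*} [NormedAddCommGroup E] [InnerProductSpace ℝ E] [CompleteSpace E]
  {f h : E → ℝ} {lam : ℝ} {x g p : E}

theorem inner_le_sub_of_isMinOn_proxGrad (hf : ConvexOn ℝ univ f) (hfd : DifferentiableAt ℝ f p)
    (hh : ConvexOn ℝ univ h) (hlam : 0 < lam)
    (hp : IsMinOn (fun y => 1 / (2 * lam) * ‖y - (x - lam • g)‖ ^ 2 + h y) univ p) (z : E) :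
    ⟪gradient f p + lam⁻¹ • (x - p) - g, z - p⟫ ≤ f z + h z - (f p + h p) := by
  have hgrad := hf.inner_gradient_le_sub (mem_univ p) (mem_univ z) hfd
  have hprox := inner_sub_le_of_isMinOn_prox hh hlam (mem_univ p) (mem_univ z) hp
  rw [show x - lam • g - p = lam • (lam⁻¹ • (x - p) - g) by
    rw [smul_sub, smul_inv_smul₀ hlam.ne']; abel, real_inner_smul_left] at hprox
  have := le_of_mul_le_mul_left hprox hlam
  rw [add_sub_assoc, inner_add_left]
  linarith

theorem norm_gradient_add_inv_smul_sub_le {L a b : ℝ} (hlam : 0 < lam) (ha : 0 ≤ a) (hb : 0 ≤ b)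
    (hlip : ‖gradient f p - gradient f x‖ ≤ L * ‖p - x‖)
    (hg : ‖g - gradient f x‖ ^ 2 ≤ (a ^ 2 / lam ^ 2 + b ^ 2) * ‖p - x‖ ^ 2) :
    ‖gradient f p + lam⁻¹ • (x - p) - g‖ ≤ ((L + b) * lam + a + 1) * ‖lam⁻¹ • (x - p)‖ := by
  set D := ‖p - x‖
  have hG : ‖lam⁻¹ • (x - p)‖ = D / lam := by
    rw [norm_smul, norm_inv, Real.norm_of_nonneg hlam.le, norm_sub_rev, inv_mul_eq_div]
  have herr : ‖gradient f x - g‖ ≤ (a / lam + b) * D := by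
    rw [norm_sub_rev]
    refine le_of_sq_le_sq ?_ (by positivity)
    have hab : 0 ≤ a / lam * b * D ^ 2 := by positivity
    calc ‖g - gradient f x‖ ^ 2 ≤ (a ^ 2 / lam ^ 2 + b ^ 2) * D ^ 2 := hg
      _ ≤ ((a / lam + b) * D) ^ 2 := by rw [mul_pow, add_sq, div_pow]; nlinarith
  calc ‖gradient f p + lam⁻¹ • (x - p) - g‖
      = ‖lam⁻¹ • (x - p) + (gradient f p - gradient f x) + (gradient f x - g)‖ := by
        congr 1; abel
    _ ≤ ‖lam⁻¹ • (x - p)‖ + ‖gradient f p - gradient f x‖ + ‖gradient f x - g‖ := norm_add₃_le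
    _ ≤ D / lam + L * D + (a / lam + b) * D := by rw [hG]; gcongr
    _ = ((L + b) * lam + a + 1) * ‖lam⁻¹ • (x - p)‖ := by rw [hG]; field_simp; ring

theorem sub_le_mul_norm_of_isMinOn_proxGrad {L a b B : ℝ} {z : E} (hf : ConvexOn ℝ univ f)
    (hfd : DifferentiableAt ℝ f p) (hh : ConvexOn ℝ univ h) (hlam : 0 < lam) (ha : 0 ≤ a)
    (hb : 0 ≤ b) (hlip : ‖gradient f p - gradient f x‖ ≤ L * ‖p - x‖)
    (hg : ‖g - gradient f x‖ ^ 2 ≤ (a ^ 2 / lam ^ 2 + b ^ 2) * ‖p - x‖ ^ 2)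
    (hp : IsMinOn (fun y => 1 / (2 * lam) * ‖y - (x - lam • g)‖ ^ 2 + h y) univ p)
    (hz : ‖p - z‖ ≤ B) :
    f p + h p - (f z + h z) ≤ B * ((L + b) * lam + a + 1) * ‖lam⁻¹ • (x - p)‖ := by
  have hsub := inner_le_sub_of_isMinOn_proxGrad hf hfd hh hlam hp z
  have hw := norm_gradient_add_inv_smul_sub_le hlam ha hb hlip hg
  rw [← neg_sub p z, inner_neg_right] at hsub
  calc f p + h p - (f z + h z)
      ≤ ⟪gradient f p + lam⁻¹ • (x - p) - g, p - z⟫ := by linarith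
    _ ≤ ‖gradient f p + lam⁻¹ • (x - p) - g‖ * ‖p - z‖ := real_inner_le_norm _ _
    _ ≤ ((L + b) * lam + a + 1) * ‖lam⁻¹ • (x - p)‖ * B :=
        mul_le_mul hw hz (norm_nonneg _) ((norm_nonneg _).trans hw)
    _ = B * ((L + b) * lam + a + 1) * ‖lam⁻¹ • (x - p)‖ := by ring

end ProxGradStep

theorem add_div_mul_sq_le_of_le_mul_of_sub_le {d d' r Υ κ κ' : ℝ} (hd' : 0 ≤ d') (hκ : 0 ≤ κ)
    (hκκ' : κ ≤ κ') (hgap : d' ≤ Υ * r) (hdesc : d' - d ≤ -(κ' / 2) * r ^ 2) :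
    d' + κ / (2 * Υ ^ 2) * d' ^ 2 ≤ d := by
  have hsq : d' ^ 2 ≤ Υ ^ 2 * r ^ 2 := by
    rw [← mul_pow]; exact pow_le_pow_left₀ hd' hgap 2
  have hκΥ : κ / (2 * Υ ^ 2) * (Υ ^ 2 * r ^ 2) ≤ κ / 2 * r ^ 2 := by
    rw [show κ / (2 * Υ ^ 2) * (Υ ^ 2 * r ^ 2) = κ / 2 * r ^ 2 * (Υ ^ 2 / Υ ^ 2) by ring]
    exact mul_le_of_le_one_right (by positivity) (div_self_le_one _)
  have : κ / (2 * Υ ^ 2) * d' ^ 2 ≤ κ' / 2 * r ^ 2 := calc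
    _ ≤ κ / (2 * Υ ^ 2) * (Υ ^ 2 * r ^ 2) := by gcongr
    _ ≤ κ / 2 * r ^ 2 := hκΥ
    _ ≤ κ' / 2 * r ^ 2 := by gcongr
  linarith

theorem stmt13_general {n : ℕ}
    (f h : EuclideanSpace ℝ (Fin n) → ℝ)
    (hconv : ConvexOn ℝ Set.univ h)
    (hfconv : ConvexOn ℝ Set.univ f)
    (hf : Differentiable ℝ f)
    (L : ℝ) (hL : 0 < L)
    (hlip : ∀ u v : EuclideanSpace ℝ (Fin n),
      ‖gradient f u - gradient f v‖ ≤ L * ‖u - v‖)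
    (prox : ℝ → EuclideanSpace ℝ (Fin n) → EuclideanSpace ℝ (Fin n))
    (hprox : ∀ lam : ℝ, 0 < lam → ∀ u y : EuclideanSpace ℝ (Fin n),
      1 / (2 * lam) * ‖prox lam u - u‖ ^ 2 + h (prox lam u)
        ≤ 1 / (2 * lam) * ‖y - u‖ ^ 2 + h y)
    (θ a b lamLow lamMax B2 : ℝ)
    (hθ0 : 0 < θ)
    (ha0 : 0 ≤ a) (hb : 0 ≤ b)
    (hlamLow : 0 < lamLow) (hB2 : 0 < B2)
    (F : EuclideanSpace ℝ (Fin n) → ℝ) (hF : ∀ y, F y = f y + h y)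
    (xstar : EuclideanSpace ℝ (Fin n)) (hxstar : ∀ y, F xstar ≤ F y)
    (x g : ℕ → EuclideanSpace ℝ (Fin n))
    (lam : ℕ → ℝ) (hlam : ∀ i, lam i ∈ Set.Icc lamLow lamMax)
    (hupd : ∀ i, x (i + 1) = prox (lam i) (x i - lam i • g i))
    (hgrad : ∀ i, ‖g i - gradient f (x i)‖ ^ 2
      ≤ (a ^ 2 / (lam i) ^ 2 + b ^ 2) * ‖x (i + 1) - x i‖ ^ 2)
    (hdesc : ∀ i, F (x (i + 1)) - F (x i)
      ≤ -(θ * lam i / 2) * ‖(lam i)⁻¹ • (x i - prox (lam i) (x i - lam i • g i))‖ ^ 2)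
    (hbd : ∀ i, ‖x i - xstar‖ ≤ B2) :
    ∀ N : ℕ, 2 ≤ N →
      F (x N) - F xstar
        ≤ max ((1 / Real.sqrt 2) ^ (N - 1) * (F (x 0) - F xstar))
            (8 * (B2 * ((L + b) * lamMax + a + 1)) ^ 2 / (θ * lamLow * ((N : ℝ) - 1))) := by
  intro N hN
  have hlamMax : 0 < lamMax := hlamLow.trans_le ((hlam 0).1.trans (hlam 0).2)
  set Υ := B2 * ((L + b) * lamMax + a + 1) with hΥdef
  have hΥ : 0 < Υ := by positivity
  have hrec : ∀ i, F (x (i + 1)) - F xstar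
      + θ * lamLow / (2 * Υ ^ 2) * (F (x (i + 1)) - F xstar) ^ 2 ≤ F (x i) - F xstar := by
    intro i
    obtain ⟨hlo, hhi⟩ := hlam i
    have hlami : 0 < lam i := hlamLow.trans_le hlo
    have hgap : F (x (i + 1)) - F xstar ≤ Υ * ‖(lam i)⁻¹ • (x i - x (i + 1))‖ := by
      rw [hF, hF, hΥdef]
      refine (sub_le_mul_norm_of_isMinOn_proxGrad hfconv (hf _) hconv hlami ha0 hb (hlip _ _)
        (hgrad i) (isMinOn_iff.2 fun y _ => hupd i ▸ hprox _ hlami _ y) (hbd (i + 1))).trans ?_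
      gcongr
    refine add_div_mul_sq_le_of_le_mul_of_sub_le (κ' := θ * lam i) (sub_nonneg.2 (hxstar _))
      (by positivity) (by gcongr) hgap ?_
    simpa [← hupd i] using hdesc i
  have hN1 : (0 : ℝ) < N - 1 := by linarith [show (2 : ℝ) ≤ N by exact_mod_cast hN]
  convert sq_recurrence_rate (δ := fun i => F (x i) - F xstar) (by positivity) hrec hN using 2
  field_simp
  ring

/-- convex case with error-free line search; the optimality gap decays at
an accelerated-then-sublinear rate. -/
theorem stmt13 {n : ℕ}
    (f h : EuclideanSpace ℝ (Fin n) → ℝ)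
    (hconv : ConvexOn ℝ Set.univ h)
    (hfconv : ConvexOn ℝ Set.univ f)
    (hf : Differentiable ℝ f)
    (L : ℝ) (hL : 0 < L)
    (hlip : ∀ u v : EuclideanSpace ℝ (Fin n),
      ‖gradient f u - gradient f v‖ ≤ L * ‖u - v‖)
    (prox : ℝ → EuclideanSpace ℝ (Fin n) → EuclideanSpace ℝ (Fin n))
    (hprox : ∀ lam : ℝ, 0 < lam → ∀ u y : EuclideanSpace ℝ (Fin n),
      1 / (2 * lam) * ‖prox lam u - u‖ ^ 2 + h (prox lam u)
        ≤ 1 / (2 * lam) * ‖y - u‖ ^ 2 + h y)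
    (θ a b lamLow lamMax B2 : ℝ)
    (hθ0 : 0 < θ) (hθ1 : θ < 1)
    (ha0 : 0 ≤ a) (ha1 : a < 1) (hb : 0 ≤ b)
    (hlamLow : 0 < lamLow) (hord : lamLow ≤ lamMax) (hB2 : 0 < B2)
    (F : EuclideanSpace ℝ (Fin n) → ℝ) (hF : ∀ y, F y = f y + h y)
    (xstar : EuclideanSpace ℝ (Fin n)) (hxstar : ∀ y, F xstar ≤ F y)
    (x g : ℕ → EuclideanSpace ℝ (Fin n))
    (lam : ℕ → ℝ) (hlam : ∀ i, lam i ∈ Set.Icc lamLow lamMax)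
    (hupd : ∀ i, x (i + 1) = prox (lam i) (x i - lam i • g i))
    (hgrad : ∀ i, ‖g i - gradient f (x i)‖ ^ 2
      ≤ (a ^ 2 / (lam i) ^ 2 + b ^ 2) * ‖x (i + 1) - x i‖ ^ 2)
    (hdesc : ∀ i, F (x (i + 1)) - F (x i)
      ≤ -(θ * lam i / 2) * ‖(lam i)⁻¹ • (x i - prox (lam i) (x i - lam i • g i))‖ ^ 2)
    (hbd : ∀ i, ‖x i - xstar‖ ≤ B2) :
    ∀ N : ℕ, 2 ≤ N →
      F (x N) - F xstar
        ≤ max ((1 / Real.sqrt 2) ^ (N - 1) * (F (x 0) - F xstar))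
            (8 * (B2 * ((L + b) * lamMax + a + 1)) ^ 2 / (θ * lamLow * ((N : ℝ) - 1))) :=
  stmt13_general f h hconv hfconv hf L hL hlip prox hprox θ a b lamLow lamMax B2 hθ0 ha0 hb hlamLow
    hB2 F hF xstar hxstar x g lam hlam hupd hgrad hdesc hbd
end

section
/- Let K be a positive integer and let x, y ∈ ℝ^K have all components positive. Then ‖x − y‖ ≤ max{‖x‖, ‖y‖} · K · μ(x, y), where ‖·‖ is the Euclidean norm. -/
/-- Thompson's metric on the positive orthant:
`μ(p, q) = max_k |log p_k − log q_k|`. -/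
noncomputable def thompsonMetric {K : ℕ} (p q : Fin K → ℝ) : ℝ :=
  ⨆ k : Fin K, |Real.log (p k) - Real.log (q k)|

lemma aux_log_bound {a b : ℝ} (ha : 0 < a) (hb : 0 < b) :
    |a - b| ≤ max a b * |Real.log a - Real.log b| := by
  rcases le_total a b with h | h
  · have hlog : Real.log a ≤ Real.log b := Real.log_le_log ha h
    have h1 : Real.log (a / b) ≤ a / b - 1 := Real.log_le_sub_one_of_pos (div_pos ha hb)
    rw [Real.log_div (ne_of_gt ha) (ne_of_gt hb)] at h1
    rw [abs_of_nonpos (by linarith), abs_of_nonpos (by linarith), max_eq_right h]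
    have hb' : (0:ℝ) < b := hb
    have : a / b * b = a := div_mul_cancel₀ a (ne_of_gt hb)
    nlinarith
  · have hlog : Real.log b ≤ Real.log a := Real.log_le_log hb h
    have h1 : Real.log (b / a) ≤ b / a - 1 := Real.log_le_sub_one_of_pos (div_pos hb ha)
    rw [Real.log_div (ne_of_gt hb) (ne_of_gt ha)] at h1
    rw [abs_of_nonneg (by linarith), abs_of_nonneg (by linarith), max_eq_left h]
    have : b / a * a = b := div_mul_cancel₀ b (ne_of_gt ha)
    nlinarith

lemma coord_le_norm {K : ℕ} (x : EuclideanSpace ℝ (Fin K)) (k : Fin K) :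
    |x k| ≤ ‖x‖ := by
  rw [EuclideanSpace.norm_eq]
  simp only [Real.norm_eq_abs, sq_abs]
  calc |x k| = Real.sqrt ((x k) ^ 2) := (Real.sqrt_sq_eq_abs _).symm
    _ ≤ _ := by
        apply Real.sqrt_le_sqrt
        exact Finset.single_le_sum (f := fun i => (x i) ^ 2)
          (fun i _ => sq_nonneg _) (Finset.mem_univ k)

/-- for positive vectors `x, y ∈ ℝ^K`,
`‖x − y‖ ≤ max{‖x‖, ‖y‖} · K · μ(x, y)`. -/
theorem stmt16 {K : ℕ} (hK : 0 < K)
    (x y : EuclideanSpace ℝ (Fin K))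
    (hx : ∀ k, 0 < x k) (hy : ∀ k, 0 < y k) :
    ‖x - y‖ ≤ max ‖x‖ ‖y‖ * (K : ℝ) * thompsonMetric (fun k => x k) (fun k => y k) := by
  haveI : Nonempty (Fin K) := ⟨⟨0, hK⟩⟩
  set μ := thompsonMetric (fun k => x k) (fun k => y k) with hμdef
  set M := max ‖x‖ ‖y‖ with hM
  have hbdd : BddAbove (Set.range fun k : Fin K =>
      |Real.log (x k) - Real.log (y k)|) := (Set.finite_range _).bddAbove
  have hμ0 : 0 ≤ μ := le_trans (abs_nonneg _) (le_ciSup hbdd (Classical.arbitrary _))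
  have hM0 : 0 ≤ M := le_trans (norm_nonneg x) (le_max_left _ _)
  have hpt : ∀ k, |x k - y k| ≤ M * μ := by
    intro k
    calc |x k - y k| ≤ max (x k) (y k) * |Real.log (x k) - Real.log (y k)| :=
          aux_log_bound (hx k) (hy k)
      _ ≤ M * μ := by
          apply mul_le_mul _ (le_ciSup hbdd k) (abs_nonneg _) hM0
          rcases le_total (x k) (y k) with h | h
          · rw [max_eq_right h]
            exact le_trans (le_abs_self _) (le_trans (coord_le_norm y k) (le_max_right _ _))
          · rw [max_eq_left h]
            exact le_trans (le_abs_self _) (le_trans (coord_le_norm x k) (le_max_left _ _))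
  have hnorm : ‖x - y‖ ≤ Real.sqrt (K * (M * μ) ^ 2) := by
    rw [EuclideanSpace.norm_eq]
    simp only [Real.norm_eq_abs, sq_abs]
    apply Real.sqrt_le_sqrt
    calc ∑ i, ((x - y) i) ^ 2 ≤ ∑ _i : Fin K, (M * μ) ^ 2 := by
          apply Finset.sum_le_sum
          intro i _
          have : ((x - y) i) = x i - y i := rfl
          rw [this, ← sq_abs]
          exact pow_le_pow_left₀ (abs_nonneg _) (hpt i) 2
      _ = K * (M * μ) ^ 2 := by simp [Finset.sum_const, nsmul_eq_mul]
  have hsqrt : Real.sqrt (K * (M * μ) ^ 2) = Real.sqrt K * (M * μ) := by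
    rw [Real.sqrt_mul (Nat.cast_nonneg K), Real.sqrt_sq (mul_nonneg hM0 hμ0)]
  have hK1 : (1:ℝ) ≤ K := by exact_mod_cast hK
  have hsqrtK : Real.sqrt K ≤ K := by
    have := Real.sqrt_le_sqrt (show (K:ℝ) ≤ (K:ℝ)^2 by nlinarith)
    rwa [Real.sqrt_sq (by linarith)] at this
  calc ‖x - y‖ ≤ Real.sqrt K * (M * μ) := by rw [← hsqrt]; exact hnorm
    _ ≤ K * (M * μ) := by
        exact mul_le_mul_of_nonneg_right hsqrtK (mul_nonneg hM0 hμ0)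
    _ = M * K * μ := by ring
end

section
/- (Thompson-metric contraction of affine interference mappings.) Let K be a positive integer and, for each k = 1,…,K, let c_k > 0, s_k > 0 and a_k ∈ ℝ^K have nonnegative components. Define J on vectors p ∈ ℝ^K with positive components by J(p)_k = c_k(a_kᵀ p + s_k) (so J(p) again has positive components), and set t(p) = max_{1≤k≤K} (a_kᵀ p)/(a_kᵀ p + s_k) ∈ [0, 1). Then for all p, q ∈ ℝ^K with positive components, μ(J(p), J(q)) ≤ max{t(p), t(q)} · μ(p, q). -/
open BigOperators

private lemma key_log (s x y : ℝ) (hs : 0 < s) (hx : 0 < x) (hxy : x ≤ y) :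
    Real.log (y + s) - Real.log (x + s) ≤ y / (y + s) * (Real.log y - Real.log x) := by
  have hy : 0 < y := lt_of_lt_of_le hx hxy
  have hys : 0 < y + s := by linarith
  set θ : ℝ := y / (y + s) with hθ
  have hθ0 : 0 ≤ θ := by positivity
  have hθ1 : 0 ≤ 1 - θ := by
    rw [hθ, sub_nonneg, div_le_one hys]; linarith
  set A : ℝ := x * (y + s) / y with hA
  have hA0 : 0 < A := by positivity
  have hconc := (strictConcaveOn_log_Ioi.concaveOn).2 (Set.mem_Ioi.mpr hA0)
      (Set.mem_Ioi.mpr hys) hθ0 hθ1 (by ring)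
  have hcomb : θ • A + (1 - θ) • (y + s) = x + s := by
    simp only [smul_eq_mul, hθ, hA]
    field_simp
    ring
  rw [hcomb] at hconc
  have hloga : Real.log A = Real.log x + Real.log (y + s) - Real.log y := by
    rw [hA, Real.log_div (by positivity) (ne_of_gt hy),
      Real.log_mul (ne_of_gt hx) (ne_of_gt hys)]
  rw [smul_eq_mul, smul_eq_mul, hloga] at hconc
  nlinarith [hconc]

/-- Thompson-metric contraction of affine interference mappings.
For `J(p)_k = c_k (a_kᵀ p + s_k)` and `t(p) = max_k (a_kᵀ p)/(a_kᵀ p + s_k)`,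
`μ(J(p), J(q)) ≤ max{t(p), t(q)} · μ(p, q)`. -/
theorem stmt17 {K : ℕ} (hK : 0 < K)
    (c s : Fin K → ℝ) (hc : ∀ k, 0 < c k) (hs : ∀ k, 0 < s k)
    (a : Fin K → Fin K → ℝ) (ha : ∀ k j, 0 ≤ a k j)
    (p q : Fin K → ℝ) (hp : ∀ k, 0 < p k) (hq : ∀ k, 0 < q k) :
    thompsonMetric (fun k => c k * ((∑ j, a k j * p j) + s k))
        (fun k => c k * ((∑ j, a k j * q j) + s k))
      ≤ max (⨆ k : Fin K, (∑ j, a k j * p j) / ((∑ j, a k j * p j) + s k))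
          (⨆ k : Fin K, (∑ j, a k j * q j) / ((∑ j, a k j * q j) + s k))
        * thompsonMetric p q := by
  haveI hKne : Nonempty (Fin K) := ⟨⟨0, hK⟩⟩
  set μ := thompsonMetric p q with hμdef
  set A : Fin K → ℝ := fun k => ∑ j, a k j * p j with hAdef
  set B : Fin K → ℝ := fun k => ∑ j, a k j * q j with hBdef
  have hA0 : ∀ k, 0 ≤ A k := fun k =>
    Finset.sum_nonneg fun j _ => mul_nonneg (ha k j) (hp j).le
  have hB0 : ∀ k, 0 ≤ B k := fun k =>
    Finset.sum_nonneg fun j _ => mul_nonneg (ha k j) (hq j).le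
  have hμk : ∀ k, |Real.log (p k) - Real.log (q k)| ≤ μ := by
    intro k
    rw [hμdef, thompsonMetric]
    exact le_ciSup (f := fun k => |Real.log (p k) - Real.log (q k)|)
      ((Set.finite_range _).bddAbove) k
  have hμ0 : 0 ≤ μ := le_trans (abs_nonneg _) (hμk ⟨0, hK⟩)
  have hpq : ∀ j, p j ≤ Real.exp μ * q j := by
    intro j
    have h1 : Real.log (p j) - Real.log (q j) ≤ μ := (abs_le.mp (hμk j)).2
    calc p j = Real.exp (Real.log (p j)) := (Real.exp_log (hp j)).symm
      _ ≤ Real.exp (μ + Real.log (q j)) := Real.exp_le_exp.mpr (by linarith)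
      _ = Real.exp μ * q j := by rw [Real.exp_add, Real.exp_log (hq j)]
  have hqp : ∀ j, q j ≤ Real.exp μ * p j := by
    intro j
    have h1 : -(μ) ≤ Real.log (p j) - Real.log (q j) := (abs_le.mp (hμk j)).1
    calc q j = Real.exp (Real.log (q j)) := (Real.exp_log (hq j)).symm
      _ ≤ Real.exp (μ + Real.log (p j)) := Real.exp_le_exp.mpr (by linarith)
      _ = Real.exp μ * p j := by rw [Real.exp_add, Real.exp_log (hp j)]
  have hAB : ∀ k, A k ≤ Real.exp μ * B k := by
    intro k
    simp only [hAdef, hBdef, Finset.mul_sum]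
    exact Finset.sum_le_sum fun j _ => by
      calc a k j * p j ≤ a k j * (Real.exp μ * q j) :=
            mul_le_mul_of_nonneg_left (hpq j) (ha k j)
        _ = Real.exp μ * (a k j * q j) := by ring
  have hBA : ∀ k, B k ≤ Real.exp μ * A k := by
    intro k
    simp only [hAdef, hBdef, Finset.mul_sum]
    exact Finset.sum_le_sum fun j _ => by
      calc a k j * q j ≤ a k j * (Real.exp μ * p j) :=
            mul_le_mul_of_nonneg_left (hqp j) (ha k j)
        _ = Real.exp μ * (a k j * p j) := by ring
  set tP : ℝ := ⨆ k : Fin K, A k / (A k + s k) with htPdef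
  set tQ : ℝ := ⨆ k : Fin K, B k / (B k + s k) with htQdef
  have htP : ∀ k, A k / (A k + s k) ≤ tP := fun k =>
    le_ciSup (f := fun k => A k / (A k + s k)) ((Set.finite_range _).bddAbove) k
  have htQ : ∀ k, B k / (B k + s k) ≤ tQ := fun k =>
    le_ciSup (f := fun k => B k / (B k + s k)) ((Set.finite_range _).bddAbove) k
  have htP0 : 0 ≤ tP := by
    refine le_trans ?_ (htP ⟨0, hK⟩)
    have := hA0 ⟨0, hK⟩
    have := hs ⟨0, hK⟩
    positivity
  have hmax0 : 0 ≤ max tP tQ := le_trans htP0 (le_max_left _ _)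
  have hkey : ∀ k, |Real.log (A k + s k) - Real.log (B k + s k)| ≤ max tP tQ * μ := by
    intro k
    rcases eq_or_lt_of_le (hA0 k) with h0 | hApos
    · have hBk : B k = 0 := by nlinarith [hBA k, hB0 k, Real.exp_pos μ]
      rw [← h0, hBk, sub_self, abs_zero]
      exact mul_nonneg hmax0 hμ0
    · have hBpos : 0 < B k := by nlinarith [hAB k, Real.exp_pos μ]
      rcases le_total (B k) (A k) with hle | hle
      · have habs : |Real.log (A k + s k) - Real.log (B k + s k)|
            = Real.log (A k + s k) - Real.log (B k + s k) := by
          have := Real.log_le_log (by linarith [hs k] : (0:ℝ) < B k + s k)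
            (by linarith : B k + s k ≤ A k + s k)
          exact abs_of_nonneg (by linarith)
        rw [habs]
        have hlogA : Real.log (A k) - Real.log (B k) ≤ μ := by
          have h := Real.log_le_log hApos (hAB k)
          rw [Real.log_mul (Real.exp_ne_zero μ) (ne_of_gt hBpos), Real.log_exp] at h
          linarith
        have hkl := key_log (s k) (B k) (A k) (hs k) hBpos hle
        have hlognn : 0 ≤ Real.log (A k) - Real.log (B k) :=
          sub_nonneg.mpr (Real.log_le_log hBpos hle)
        have hfrac : A k / (A k + s k) ≤ max tP tQ := le_trans (htP k) (le_max_left _ _)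
        have h2 : A k / (A k + s k) * (Real.log (A k) - Real.log (B k)) ≤ max tP tQ * μ :=
          mul_le_mul hfrac hlogA hlognn hmax0
        linarith
      · have habs : |Real.log (A k + s k) - Real.log (B k + s k)|
            = Real.log (B k + s k) - Real.log (A k + s k) := by
          have := Real.log_le_log (by linarith [hs k] : (0:ℝ) < A k + s k)
            (by linarith : A k + s k ≤ B k + s k)
          rw [abs_sub_comm]
          exact abs_of_nonneg (by linarith)
        rw [habs]
        have hlogB : Real.log (B k) - Real.log (A k) ≤ μ := by
          have h := Real.log_le_log hBpos (hBA k)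
          rw [Real.log_mul (Real.exp_ne_zero μ) (ne_of_gt hApos), Real.log_exp] at h
          linarith
        have hkl := key_log (s k) (A k) (B k) (hs k) hApos hle
        have hlognn : 0 ≤ Real.log (B k) - Real.log (A k) :=
          sub_nonneg.mpr (Real.log_le_log hApos hle)
        have hfrac : B k / (B k + s k) ≤ max tP tQ := le_trans (htQ k) (le_max_right _ _)
        have h2 : B k / (B k + s k) * (Real.log (B k) - Real.log (A k)) ≤ max tP tQ * μ :=
          mul_le_mul hfrac hlogB hlognn hmax0
        linarith
  unfold thompsonMetric
  apply ciSup_le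
  intro k
  have h1 : (0:ℝ) < A k + s k := by linarith [hA0 k, hs k]
  have h2 : (0:ℝ) < B k + s k := by linarith [hB0 k, hs k]
  have heq : Real.log (c k * (A k + s k)) - Real.log (c k * (B k + s k))
      = Real.log (A k + s k) - Real.log (B k + s k) := by
    rw [Real.log_mul (ne_of_gt (hc k)) (ne_of_gt h1),
      Real.log_mul (ne_of_gt (hc k)) (ne_of_gt h2)]
    ring
  calc |Real.log (c k * (A k + s k)) - Real.log (c k * (B k + s k))|
      = |Real.log (A k + s k) - Real.log (B k + s k)| := by rw [heq]
    _ ≤ max tP tQ * μ := hkey k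
end

section
/- Let K be a positive integer, let β* ∈ ℝ^K have all components positive, let κ ∈ [0,1) and t₀ > 0, and let T : ℝ^K → ℝ^K be Fréchet differentiable at β* with T(β*) = β*. Suppose that for every t ∈ (0, t₀], T((1+t)β*) ≤ (1+t)^κ β* componentwise. Then the derivative D = DT(β*) (a linear map ℝ^K → ℝ^K) satisfies D β* ≤ κ β* componentwise. -/
/-- if `T` is Fréchet differentiable at a fixed point `β*` with positive
components, and `T((1+t)β*) ≤ (1+t)^κ β*` componentwise for all small `t > 0`, then the
derivative satisfies `(DT(β*)) β* ≤ κ β*` componentwise. -/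
theorem stmt18 {K : ℕ} (hK : 0 < K)
    (βs : EuclideanSpace ℝ (Fin K)) (hβ : ∀ k, 0 < βs k)
    (κ t₀ : ℝ) (hκ0 : 0 ≤ κ) (hκ1 : κ < 1) (ht₀ : 0 < t₀)
    (T : EuclideanSpace ℝ (Fin K) → EuclideanSpace ℝ (Fin K))
    (hdiff : DifferentiableAt ℝ T βs)
    (hfix : T βs = βs)
    (hcontract : ∀ t : ℝ, 0 < t → t ≤ t₀ →
      ∀ k, T ((1 + t) • βs) k ≤ (1 + t) ^ κ * βs k) :
    ∀ k, (fderiv ℝ T βs) βs k ≤ κ * βs k := by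
  intro k
  have e0 : ((1:ℝ) + 0) • βs = βs := by norm_num
  -- derivative of t ↦ (1+t)•βs
  have hg : HasDerivAt (fun t : ℝ => (1 + t) • βs) βs 0 := by
    have h1 : HasDerivAt (fun t : ℝ => (1:ℝ) + t) 1 0 := (hasDerivAt_id 0).const_add 1
    simpa using h1.smul_const βs
  have hT : HasFDerivAt T (fderiv ℝ T βs) (((1:ℝ) + 0) • βs) := by
    rw [e0]; exact hdiff.hasFDerivAt
  have hfd : HasDerivAt (fun t : ℝ => T ((1 + t) • βs)) (fderiv ℝ T βs βs) 0 :=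
    hT.comp_hasDerivAt 0 hg
  have hfk : HasDerivAt (fun t : ℝ => T ((1 + t) • βs) k) ((fderiv ℝ T βs) βs k) 0 :=
    (EuclideanSpace.proj k (𝕜 := ℝ)).hasFDerivAt.comp_hasDerivAt 0 hfd
  -- derivative of t ↦ (1+t)^κ * βs k
  have h1 : HasDerivAt (fun t : ℝ => (1:ℝ) + t) 1 0 := (hasDerivAt_id 0).const_add 1
  have h2 : HasDerivAt (fun x : ℝ => x ^ κ) κ ((1:ℝ) + 0) := by
    have := Real.hasDerivAt_rpow_const (x := (1:ℝ)) (p := κ) (Or.inl one_ne_zero)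
    simpa [Real.one_rpow] using this
  have hhk : HasDerivAt (fun t : ℝ => (1 + t) ^ κ * βs k) (κ * βs k) 0 := by
    have := (h2.comp 0 h1).mul_const (βs k)
    simpa [Real.one_rpow] using this
  -- compare slopes on the right of 0
  set f : ℝ → ℝ := fun t => T ((1 + t) • βs) k
  set h : ℝ → ℝ := fun t => (1 + t) ^ κ * βs k
  have hf0 : f 0 = βs k := by simp only [f, e0, hfix]
  have hh0 : h 0 = βs k := by simp [h, Real.one_rpow]
  have hsub : Set.Ioi (0:ℝ) ⊆ {(0:ℝ)}ᶜ := fun x hx => ne_of_gt hx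
  have htf : Filter.Tendsto (slope f 0) (nhdsWithin 0 (Set.Ioi 0))
      (nhds ((fderiv ℝ T βs) βs k)) :=
    (hasDerivAt_iff_tendsto_slope.mp hfk).mono_left (nhdsWithin_mono _ hsub)
  have hth : Filter.Tendsto (slope h 0) (nhdsWithin 0 (Set.Ioi 0))
      (nhds (κ * βs k)) :=
    (hasDerivAt_iff_tendsto_slope.mp hhk).mono_left (nhdsWithin_mono _ hsub)
  have hmem : Set.Ioc (0:ℝ) t₀ ∈ nhdsWithin (0:ℝ) (Set.Ioi 0) :=
    Ioc_mem_nhdsGT_of_mem ⟨le_refl 0, ht₀⟩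
  refine le_of_tendsto_of_tendsto htf hth ?_
  filter_upwards [hmem] with t ht
  have ht0 : (0:ℝ) < t := ht.1
  have hle : f t ≤ h t := hcontract t ht0 ht.2 k
  simp only [slope_def_field]
  rw [hf0, hh0]
  gcongr
end
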